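/- arXiv:math/0610071 — 6 statements merged into one kernel-verified Lean document; each statement's English description precedes it below -/
import Mathlib

section
/- Suppose M ⊆ Aut L is a subgroup closed under G-conjugation (L/K finite Galois with group G). Then the following are equivalent and each implies M is separating with respect to K: (1) M ∩ G = {e}; (2) every nonidentity m ∈ M moves some element of K; (3) G m₁ G = G m₂ G implies m₁ and m₂ are G-conjugate. -/
/-!
Let `G = Gal(L/K)` inside `Aut L`. An automorphism fixes `K` pointwise exactly when it lies in `G`,
and two automorphisms agree on `K` exactly when `m₂⁻¹ m₁ ∈ G`; so (1) and (2) both say that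
`M ∩ G` is trivial, and then restriction to `K` is injective on `M`. If `M ∩ G = 1` and
`m₁ = g₁ m₂ g₂`, then `m₁` and the conjugate `g₁ m₂ g₁⁻¹ ∈ M` differ by `g₁ g₂ ∈ G`, hence coincide.
Conversely, an `m ∈ M ∩ G` has the double coset `G 1 G = G`, so (3) makes `m` conjugate to `1`.
-/

/-- The double coset `G m G` of a ring automorphism `m` of `L` with respect to the Galois
group `G = Gal(L/K)` (viewed inside `Aut L`). -/
def galDoubleCoset (K L : Type*) [Field K] [Field L] [Algebra K L] (m : L ≃+* L) :
    Set (L ≃+* L) :=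
  {x | ∃ g₁ g₂ : L ≃ₐ[K] L, x = (g₁ : L ≃+* L) * m * (g₂ : L ≃+* L)}

open DoubleCoset

namespace Subgroup

variable {A : Type*} [Group A] {H M : Subgroup A}

theorem eq_of_disjoint_of_inv_mul_mem (hMH : Disjoint M H) {m₁ m₂ : A} (hm₁ : m₁ ∈ M)
    (hm₂ : m₂ ∈ M) (h : m₂⁻¹ * m₁ ∈ H) : m₁ = m₂ :=
  (inv_mul_eq_one.mp (disjoint_def.mp hMH (M.mul_mem (M.inv_mem hm₂) hm₁) h)).symm

theorem exists_conj_of_doubleCoset_eq (hM : ∀ h ∈ H, ∀ m ∈ M, h⁻¹ * m * h ∈ M)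
    (hMH : Disjoint M H) {m₁ m₂ : A} (hm₁ : m₁ ∈ M) (hm₂ : m₂ ∈ M)
    (hdc : doubleCoset m₁ H H = doubleCoset m₂ H H) : ∃ h ∈ H, m₁ = h⁻¹ * m₂ * h := by
  obtain ⟨h₁, hh₁, h₂, hh₂, rfl⟩ := mem_doubleCoset.mp (hdc ▸ mem_doubleCoset_self H H m₁)
  refine ⟨h₁⁻¹, H.inv_mem hh₁,
    eq_of_disjoint_of_inv_mul_mem hMH hm₁ (hM _ (H.inv_mem hh₁) m₂ hm₂) ?_⟩
  convert H.mul_mem hh₁ hh₂ using 1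
  group

theorem disjoint_of_forall_doubleCoset_eq_exists_conj
    (hconj : ∀ m₁ ∈ M, ∀ m₂ ∈ M, doubleCoset m₁ H H = doubleCoset m₂ H H →
      ∃ h ∈ H, m₁ = h⁻¹ * m₂ * h) : Disjoint M H := by
  refine disjoint_def.mpr fun {m} hmM hmH ↦ ?_
  have hm : m ∈ doubleCoset 1 H H := mem_doubleCoset.mpr ⟨m, hmH, 1, H.one_mem, by group⟩
  obtain ⟨h, -, rfl⟩ := hconj m hmM 1 M.one_mem (doubleCoset_eq_of_mem hm)
  group

end Subgroup

section AlgEquivRange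

variable (K L : Type*) [CommSemiring K] [Semiring L] [Algebra K L]

/-- `Gal(L/K)` as a subgroup of the ring automorphisms of `L`. -/
def algEquivRange : Subgroup (L ≃+* L) :=
  (MulSemiringAction.toRingEquiv (L ≃ₐ[K] L) L).range

variable {K L}

theorem exists_mem_algEquivRange {p : (L ≃+* L) → Prop} :
    (∃ m ∈ algEquivRange K L, p m) ↔ ∃ g : L ≃ₐ[K] L, p g :=
  ⟨fun ⟨_, ⟨g, rfl⟩, hp⟩ ↦ ⟨g, hp⟩, fun ⟨g, hp⟩ ↦ ⟨g, ⟨g, rfl⟩, hp⟩⟩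

theorem forall_mem_algEquivRange {p : (L ≃+* L) → Prop} :
    (∀ m ∈ algEquivRange K L, p m) ↔ ∀ g : L ≃ₐ[K] L, p g :=
  ⟨fun h g ↦ h g ⟨g, rfl⟩, fun h _ ⟨g, hg⟩ ↦ hg ▸ h g⟩

theorem mem_algEquivRange_iff {m : L ≃+* L} :
    m ∈ algEquivRange K L ↔ ∀ c : K, m (algebraMap K L c) = algebraMap K L c :=
  ⟨fun ⟨g, hg⟩ ↦ hg ▸ g.commutes, fun h ↦ ⟨AlgEquiv.ofRingEquiv h, rfl⟩⟩

theorem notMem_algEquivRange_iff {m : L ≃+* L} :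
    m ∉ algEquivRange K L ↔ ∃ c : K, m (algebraMap K L c) ≠ algebraMap K L c := by
  rw [mem_algEquivRange_iff, not_forall]

theorem inv_mul_mem_algEquivRange_iff {m₁ m₂ : L ≃+* L} :
    m₂⁻¹ * m₁ ∈ algEquivRange K L ↔ ∀ c : K, m₁ (algebraMap K L c) = m₂ (algebraMap K L c) := by
  simp only [mem_algEquivRange_iff, RingAut.mul_apply, RingAut.inv_apply,
    RingEquiv.symm_apply_eq]

end AlgEquivRange

theorem galDoubleCoset_eq_doubleCoset (K L : Type*) [Field K] [Field L] [Algebra K L]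
    (m : L ≃+* L) :
    galDoubleCoset K L m = doubleCoset m (algEquivRange K L) (algEquivRange K L) := by
  ext x
  simp only [mem_doubleCoset, SetLike.mem_coe, exists_mem_algEquivRange]
  rfl

theorem separating_group_characterizations_general
    (K L : Type*) [Field K] [Field L] [Algebra K L]
    (M : Subgroup (L ≃+* L))
    (hconj : ∀ (g : L ≃ₐ[K] L), ∀ m ∈ M,
      ((g : L ≃+* L))⁻¹ * m * (g : L ≃+* L) ∈ M) :
    (((∀ m ∈ M, (∀ c : K, m (algebraMap K L c) = algebraMap K L c) → m = 1) ↔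
      (∀ m ∈ M, m ≠ 1 → ∃ c : K, m (algebraMap K L c) ≠ algebraMap K L c)) ∧
     ((∀ m ∈ M, m ≠ 1 → ∃ c : K, m (algebraMap K L c) ≠ algebraMap K L c) ↔
      (∀ m₁ ∈ M, ∀ m₂ ∈ M, galDoubleCoset K L m₁ = galDoubleCoset K L m₂ →
        ∃ g : L ≃ₐ[K] L, m₁ = ((g : L ≃+* L))⁻¹ * m₂ * (g : L ≃+* L)))) ∧
    ((∀ m ∈ M, (∀ c : K, m (algebraMap K L c) = algebraMap K L c) → m = 1) →
      (∀ m₁ ∈ M, ∀ m₂ ∈ M,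
        (∀ c : K, m₁ (algebraMap K L c) = m₂ (algebraMap K L c)) → m₁ = m₂)) := by
  have hG : ∀ h ∈ algEquivRange K L, ∀ m ∈ M, h⁻¹ * m * h ∈ M :=
    forall_mem_algEquivRange.mpr hconj
  simp only [← mem_algEquivRange_iff, ← notMem_algEquivRange_iff, ← inv_mul_mem_algEquivRange_iff,
    galDoubleCoset_eq_doubleCoset, ne_eq, not_imp_not, ← Subgroup.disjoint_def]
  refine ⟨⟨trivial, fun hMG _ hm₁ _ hm₂ hdc ↦ ?_, fun h ↦ ?_⟩, ?_⟩
  · exact exists_mem_algEquivRange.mp (Subgroup.exists_conj_of_doubleCoset_eq hG hMG hm₁ hm₂ hdc)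
  · exact Subgroup.disjoint_of_forall_doubleCoset_eq_exists_conj fun _ hm₁ _ hm₂ hdc ↦
      exists_mem_algEquivRange.mpr (h _ hm₁ _ hm₂ hdc)
  · exact fun hMG _ hm₁ _ hm₂ ↦ Subgroup.eq_of_disjoint_of_inv_mul_mem hMG hm₁ hm₂

/-- Suppose `M ⊆ Aut L` is a subgroup closed under `G`-conjugation,
where `L/K` is finite Galois with group `G`.  Then the following are equivalent, and each
implies that `M` is separating with respect to `K`:
(1) `M ∩ G = {e}`;
(2) every nonidentity `m ∈ M` moves some element of `K`;
(3) `G m₁ G = G m₂ G` implies `m₁` and `m₂` are `G`-conjugate. -/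
theorem separating_group_characterizations
    (K L : Type*) [Field K] [Field L] [Algebra K L] [FiniteDimensional K L] [IsGalois K L]
    (M : Subgroup (L ≃+* L))
    (hconj : ∀ (g : L ≃ₐ[K] L), ∀ m ∈ M,
      ((g : L ≃+* L))⁻¹ * m * (g : L ≃+* L) ∈ M) :
    (((∀ m ∈ M, (∀ c : K, m (algebraMap K L c) = algebraMap K L c) → m = 1) ↔
      (∀ m ∈ M, m ≠ 1 → ∃ c : K, m (algebraMap K L c) ≠ algebraMap K L c)) ∧
     ((∀ m ∈ M, m ≠ 1 → ∃ c : K, m (algebraMap K L c) ≠ algebraMap K L c) ↔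
      (∀ m₁ ∈ M, ∀ m₂ ∈ M, galDoubleCoset K L m₁ = galDoubleCoset K L m₂ →
        ∃ g : L ≃ₐ[K] L, m₁ = ((g : L ≃+* L))⁻¹ * m₂ * (g : L ≃+* L)))) ∧
    ((∀ m ∈ M, (∀ c : K, m (algebraMap K L c) = algebraMap K L c) → m = 1) →
      (∀ m₁ ∈ M, ∀ m₂ ∈ M,
        (∀ c : K, m₁ (algebraMap K L c) = m₂ (algebraMap K L c)) → m₁ = m₂)) :=
  separating_group_characterizations_general K L M hconj
end

section
/- Let Γ be a commutative finitely generated Harish-Chandra subalgebra of U, M a Gelfand-Tsetlin U-module, a ∈ U, and m ∈ Specm Γ. Then a·M(m) ⊆ Σ_{n ∈ X_a(m)} M(n), where X_a(m) is the finite set of maximal ideals n such that Γ/n is a subquotient of the left Γ-module ΓaΓ/(ΓaΓ·m). -/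
section
variable {k Γ U : Type*} [Field k] [CommRing Γ] [Algebra k Γ] [Ring U] [Algebra k U]

/-- The `Γ`-bimodule `ΓaΓ` generated by `a ∈ U`, as a `k`-subspace of `U`. -/
def gammaBimod (ι : Γ →ₐ[k] U) (a : U) : Submodule k U :=
  Submodule.span k {x | ∃ γ₁ γ₂ : Γ, x = ι γ₁ * a * ι γ₂}

def leftGammaSpan (ι : Γ →ₐ[k] U) (T : Set U) : Submodule k U :=
  Submodule.span k {x | ∃ γ : Γ, ∃ t ∈ T, x = ι γ * t}

def rightGammaSpan (ι : Γ →ₐ[k] U) (T : Set U) : Submodule k U :=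
  Submodule.span k {x | ∃ γ : Γ, ∃ t ∈ T, x = t * ι γ}

/-- `Γ` is a Harish-Chandra subalgebra of `U`. -/
def IsHarishChandra (ι : Γ →ₐ[k] U) : Prop :=
  ∀ a : U, (∃ s : Finset U, ↑s ⊆ (gammaBimod ι a : Set U) ∧
      leftGammaSpan ι ↑s = gammaBimod ι a) ∧
    (∃ t : Finset U, ↑t ⊆ (gammaBimod ι a : Set U) ∧
      rightGammaSpan ι ↑t = gammaBimod ι a)

variable (V : Type*) [AddCommGroup V] [Module k V] [Module U V] [IsScalarTower k U V]

/-- The generalized weight space `M(m) = {v | mᵏ v = 0 for some k}` of a `U`-module with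
respect to a maximal ideal `m` of `Γ`. -/
def wtSpace (ι : Γ →ₐ[k] U) (m : Ideal Γ) : Submodule k V where
  carrier := {v | ∃ N : ℕ, ∀ μ ∈ m ^ N, ι μ • v = 0}
  add_mem' := by
    rintro v w ⟨N, hN⟩ ⟨N', hN'⟩
    refine ⟨max N N', fun μ hμ => ?_⟩
    rw [smul_add, hN μ (Ideal.pow_le_pow_right (le_max_left N N') hμ),
      hN' μ (Ideal.pow_le_pow_right (le_max_right N N') hμ), add_zero]
  zero_mem' := ⟨0, fun μ _ => smul_zero _⟩
  smul_mem' := by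
    rintro c v ⟨N, hN⟩
    refine ⟨N, fun μ hμ => ?_⟩
    rw [← algebraMap_smul U c v, smul_smul, ← Algebra.commutes, ← smul_smul,
      hN μ hμ, smul_zero]

/-- The set `X_a(m) = {n ∈ Specm Γ | Γ/n ⊗_Γ ΓaΓ ⊗_Γ Γ/m ≠ 0}`, i.e. those maximal `n`
with `ΓaΓ ≠ n·ΓaΓ + ΓaΓ·m`. -/
def Xam (ι : Γ →ₐ[k] U) (a : U) (m : Ideal Γ) : Set (Ideal Γ) :=
  {n : Ideal Γ | n.IsMaximal ∧
    ¬ gammaBimod ι a ≤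
      Submodule.span k {x | ∃ μ ∈ n, ∃ u ∈ (gammaBimod ι a : Set U), x = ι μ * u} ⊔
      Submodule.span k {x | ∃ u ∈ (gammaBimod ι a : Set U), ∃ μ ∈ m, x = u * ι μ}}

end

section Aux
variable {k Γ U : Type*} [Field k] [CommRing Γ] [Algebra k Γ] [Ring U] [Algebra k U]
variable (ι : Γ →ₐ[k] U) (a : U)

/-- left stability of the bimodule -/
theorem gb_mul_left {u : U} (hu : u ∈ gammaBimod ι a) (γ : Γ) : ι γ * u ∈ gammaBimod ι a := by
  have : gammaBimod ι a ≤ Submodule.comap (LinearMap.mulLeft k (ι γ)) (gammaBimod ι a) := by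
    rw [gammaBimod, Submodule.span_le]
    rintro x ⟨γ₁, γ₂, rfl⟩
    refine Submodule.subset_span ⟨γ * γ₁, γ₂, ?_⟩
    simp only [LinearMap.mulLeft_apply, map_mul, mul_assoc]
  exact this hu

theorem gb_mul_right {u : U} (hu : u ∈ gammaBimod ι a) (γ : Γ) : u * ι γ ∈ gammaBimod ι a := by
  have : gammaBimod ι a ≤ Submodule.comap (LinearMap.mulRight k (ι γ)) (gammaBimod ι a) := by
    rw [gammaBimod, Submodule.span_le]
    rintro x ⟨γ₁, γ₂, rfl⟩
    refine Submodule.subset_span ⟨γ₁, γ₂ * γ, ?_⟩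
    simp only [LinearMap.mulRight_apply, map_mul, mul_assoc]
  exact this hu

/-- the subspace `n·ΓaΓ` -/
def nBspan (n : Ideal Γ) : Submodule k U :=
  Submodule.span k {x | ∃ μ ∈ n, ∃ u ∈ (gammaBimod ι a : Set U), x = ι μ * u}

/-- the subspace `ΓaΓ·m` -/
def Bmspan (m : Ideal Γ) : Submodule k U :=
  Submodule.span k {x | ∃ u ∈ (gammaBimod ι a : Set U), ∃ μ ∈ m, x = u * ι μ}

theorem nBspan_mul_right (n : Ideal Γ) {w : U} (hw : w ∈ nBspan ι a n) (γ : Γ) :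
    w * ι γ ∈ nBspan ι a n := by
  have : nBspan ι a n ≤ Submodule.comap (LinearMap.mulRight k (ι γ)) (nBspan ι a n) := by
    rw [nBspan, Submodule.span_le]
    rintro x ⟨μ, hμ, u, hu, rfl⟩
    refine Submodule.subset_span ⟨μ, hμ, u * ι γ, gb_mul_right ι a hu γ, ?_⟩
    simp only [LinearMap.mulRight_apply, mul_assoc]
  exact this hw

theorem Bmspan_mul_right (m₁ m₂ : Ideal Γ) {w : U} (hw : w ∈ Bmspan ι a m₁) {γ : Γ}
    (hγ : γ ∈ m₂) : w * ι γ ∈ Bmspan ι a (m₁ * m₂) := by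
  have : Bmspan ι a m₁ ≤ Submodule.comap (LinearMap.mulRight k (ι γ)) (Bmspan ι a (m₁ * m₂)) := by
    rw [Bmspan, Submodule.span_le]
    rintro x ⟨u, hu, μ, hμ, rfl⟩
    refine Submodule.subset_span ⟨u, hu, μ * γ, Ideal.mul_mem_mul hμ hγ, ?_⟩
    simp only [LinearMap.mulRight_apply, map_mul, mul_assoc]
  exact this hw

theorem Bmspan_mono {m₁ m₂ : Ideal Γ} (h : m₁ ≤ m₂) : Bmspan ι a m₁ ≤ Bmspan ι a m₂ := by
  rw [Bmspan, Submodule.span_le]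
  rintro x ⟨u, hu, μ, hμ, rfl⟩
  exact Submodule.subset_span ⟨u, hu, μ, h hμ, rfl⟩

/-- iterating the key inclusion -/
theorem key_iterate (n m : Ideal Γ)
    (hB : gammaBimod ι a ≤ nBspan ι a n ⊔ Bmspan ι a m) :
    ∀ j : ℕ, gammaBimod ι a ≤ nBspan ι a n ⊔ Bmspan ι a (m ^ (j + 1)) := by
  intro j
  induction j with
  | zero => simpa [pow_one] using hB
  | succ j ih =>
    have step : Bmspan ι a (m ^ (j + 1)) ≤ nBspan ι a n ⊔ Bmspan ι a (m ^ (j + 2)) := by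
      rw [Bmspan, Submodule.span_le]
      rintro x ⟨u, hu, μ, hμ, rfl⟩
      obtain ⟨w₁, h₁, w₂, h₂, rfl⟩ := Submodule.mem_sup.mp (hB hu)
      rw [add_mul]
      refine Submodule.add_mem _ (Submodule.mem_sup_left (nBspan_mul_right ι a n h₁ μ)) ?_
      refine Submodule.mem_sup_right ?_
      have := Bmspan_mul_right ι a m (m ^ (j+1)) h₂ hμ
      have hpow : m * m ^ (j + 1) = m ^ (j + 2) := (pow_succ' m (j+1)).symm
      rwa [hpow] at this
    refine ih.trans ?_
    refine sup_le le_sup_left (step.trans ?_)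
    exact sup_le le_sup_left le_sup_right

/-- Nullstellensatz: residue field is `k`. -/
theorem residue_of_maximal [IsAlgClosed k] [Algebra.FiniteType k Γ] (m : Ideal Γ)
    (hm : m.IsMaximal) : ∀ γ : Γ, ∃ c : k, γ - algebraMap k Γ c ∈ m := by
  haveI : m.IsMaximal := hm
  haveI : Algebra.FiniteType k (Γ ⧸ m) :=
    Algebra.FiniteType.of_surjective (Ideal.Quotient.mkₐ k m)
      (Ideal.Quotient.mkₐ_surjective k m)
  letI : Field (Γ ⧸ m) := Ideal.Quotient.field m
  haveI : Module.Finite k (Γ ⧸ m) := finite_of_finite_type_of_isJacobsonRing k (Γ ⧸ m)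
  haveI : Algebra.IsIntegral k (Γ ⧸ m) := Algebra.IsIntegral.of_finite k (Γ ⧸ m)
  have hsurj := (IsAlgClosed.algebraMap_bijective_of_isIntegral (k := k) (K := Γ ⧸ m)).2
  intro γ
  obtain ⟨c, hc⟩ := hsurj (Ideal.Quotient.mk m γ)
  refine ⟨c, ?_⟩
  rw [← Ideal.Quotient.eq_zero_iff_mem, map_sub]
  rw [IsScalarTower.algebraMap_apply k Γ (Γ ⧸ m), Ideal.Quotient.algebraMap_eq] at hc
  rw [hc, sub_self]

theorem span_pow_le (s : Finset Γ) (K : Ideal Γ)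
    (h : ∀ e ∈ s, ∃ Ne : ℕ, e ^ Ne ∈ K) :
    ∃ M : ℕ, Ideal.span (↑s : Set Γ) ^ M ≤ K := by
  classical
  induction s using Finset.induction with
  | empty => exact ⟨1, by simp [Ideal.span_empty]⟩
  | insert _ _ hx ih =>
    rename_i e s'
    obtain ⟨M', hM'⟩ := ih fun e he => h e (Finset.mem_insert_of_mem he)
    obtain ⟨Ne, hNe⟩ := h e (Finset.mem_insert_self _ _)
    refine ⟨Ne + M', ?_⟩
    rw [Finset.coe_insert, Ideal.span_insert]
    refine le_trans Ideal.sup_pow_add_le_pow_sup_pow (sup_le ?_ hM')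
    rw [Ideal.span_singleton_pow]
    exact (Ideal.span_singleton_le_iff_mem K).mpr hNe

theorem prod_sub_one_mem {ι' : Type*} (n : Ideal Γ) (s : Finset ι') (f : ι' → Γ)
    (h : ∀ i ∈ s, f i - 1 ∈ n) : (∏ i ∈ s, f i) - 1 ∈ n := by
  classical
  induction s using Finset.induction with
  | empty => simp
  | insert _ _ hx ih =>
    rename_i i s'
    rw [Finset.prod_insert hx]
    have key : f i * (∏ j ∈ s', f j) - 1
        = f i * ((∏ j ∈ s', f j) - 1) + (f i - 1) := by ring
    rw [key]
    exact Ideal.add_mem _ (Ideal.mul_mem_left _ _ (ih fun j hj => h j (Finset.mem_insert_of_mem hj)))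
      (h i (Finset.mem_insert_self _ _))

theorem maximal_of_residue (n : Ideal Γ) (h1 : (1 : Γ) ∉ n)
    (hres : ∀ γ : Γ, ∃ c : k, γ - algebraMap k Γ c ∈ n) : n.IsMaximal := by
  rw [Ideal.isMaximal_iff]
  refine ⟨h1, fun J x hnJ hxn hxJ => ?_⟩
  obtain ⟨c, hc⟩ := hres x
  have hc0 : c ≠ 0 := by
    rintro rfl
    rw [map_zero, sub_zero] at hc
    exact hxn hc
  have hcJ : algebraMap k Γ c ∈ J := by
    have : algebraMap k Γ c = x - (x - algebraMap k Γ c) := by ring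
    rw [this]
    exact J.sub_mem hxJ (hnJ hc)
  have : (1 : Γ) = algebraMap k Γ c⁻¹ * algebraMap k Γ c := by
    rw [← map_mul, inv_mul_cancel₀ hc0, map_one]
  rw [this]
  exact J.mul_mem_left _ hcJ

theorem residue_all (S' : Finset Γ) (hS' : Algebra.adjoin k (S' : Set Γ) = ⊤) (n : Ideal Γ)
    (hgen : ∀ γ ∈ S', ∃ c : k, γ - algebraMap k Γ c ∈ n) :
    ∀ γ : Γ, ∃ c : k, γ - algebraMap k Γ c ∈ n := by
  intro γ
  have hγ : γ ∈ Algebra.adjoin k (S' : Set Γ) := by rw [hS']; trivial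
  induction hγ using Algebra.adjoin_induction with
  | mem x hx => exact hgen x hx
  | algebraMap r => exact ⟨r, by rw [sub_self]; exact n.zero_mem⟩
  | add x y hx hy ihx ihy =>
    obtain ⟨c, hc⟩ := ihx; obtain ⟨c', hc'⟩ := ihy
    refine ⟨c + c', ?_⟩
    have : x + y - algebraMap k Γ (c + c') = (x - algebraMap k Γ c) + (y - algebraMap k Γ c') := by
      rw [map_add]; ring
    rw [this]; exact n.add_mem hc hc'
  | mul x y hx hy ihx ihy =>
    obtain ⟨c, hc⟩ := ihx; obtain ⟨c', hc'⟩ := ihy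
    refine ⟨c * c', ?_⟩
    have : x * y - algebraMap k Γ (c * c')
        = x * (y - algebraMap k Γ c') + (x - algebraMap k Γ c) * algebraMap k Γ c' := by
      rw [map_mul]; ring
    rw [this]
    exact n.add_mem (Ideal.mul_mem_left _ _ hc') (Ideal.mul_mem_right _ _ hc)

theorem gamma_decomp [IsAlgClosed k] [Algebra.FiniteType k Γ] (m : Ideal Γ)
    (hm : m.IsMaximal) (N : ℕ) :
    ∃ G : Finset Γ, ∀ γ : Γ, ∃ σ ∈ Submodule.span k (G : Set Γ), γ - σ ∈ m ^ N := by
  classical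
  haveI := Algebra.FiniteType.isNoetherianRing k Γ
  induction N with
  | zero =>
    exact ⟨∅, fun γ => ⟨0, Submodule.zero_mem _, by simp [Ideal.one_eq_top]⟩⟩
  | succ N ih =>
    obtain ⟨G, hG⟩ := ih
    obtain ⟨F, hF⟩ : (m ^ N).FG := IsNoetherian.noetherian _
    refine ⟨G ∪ F, fun γ => ?_⟩
    obtain ⟨σ, hσ, hγσ⟩ := hG γ
    rw [← hF] at hγσ
    obtain ⟨f, -, hf⟩ := Submodule.mem_span_finset.mp hγσ
    choose c hc using fun i => residue_of_maximal (k := k) m hm (f i)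
    refine ⟨σ + ∑ i ∈ F, c i • i, ?_, ?_⟩
    · refine Submodule.add_mem _ (Submodule.span_mono (by simp) hσ) ?_
      exact Submodule.sum_mem _ fun i hi =>
        Submodule.smul_mem _ _ (Submodule.subset_span (by simp [hi]))
    · have key : γ - (σ + ∑ i ∈ F, c i • i) = (∑ i ∈ F, f i • i) - ∑ i ∈ F, c i • i := by
        rw [hf]; ring
      rw [key, ← Finset.sum_sub_distrib]
      refine Ideal.sum_mem _ fun i hi => ?_
      have hiF : i ∈ m ^ N := by rw [← hF]; exact Ideal.subset_span hi
      have : f i • i - c i • i = (f i - algebraMap k Γ (c i)) * i := by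
        rw [sub_mul, smul_eq_mul, Algebra.smul_def]
      rw [this, pow_succ, mul_comm (m ^ N) m]
      exact Ideal.mul_mem_mul (hc i) hiF

variable (V : Type*) [AddCommGroup V] [Module k V] [Module U V] [IsScalarTower k U V]

/-- the action map `u ↦ u • v` as a `k`-linear map -/
def actmap (v : V) : U →ₗ[k] V where
  toFun u := u • v
  map_add' u w := add_smul u w v
  map_smul' c u := smul_assoc c u v

@[simp] theorem actmap_apply (v : V) (u : U) : actmap (k := k) (U := U) V v u = u • v := rfl

variable [Module Γ V] [IsScalarTower k Γ V]

/-- `ΓaΓ • v` as a `Γ`-submodule of `V`. -/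
def XGamma (v : V) : Submodule Γ V :=
  Submodule.span Γ {w | ∃ u ∈ (gammaBimod ι a : Set U), w = u • v}

theorem XGamma_fg (hsmul : ∀ (γ : Γ) (w : V), γ • w = ι γ • w) (v : V) (s : Finset U)
    (hsB : (s : Set U) ⊆ (gammaBimod ι a : Set U))
    (hsEq : leftGammaSpan ι ↑s = gammaBimod ι a) :
    (XGamma ι a V v).FG := by
  classical
  refine ⟨s.image (fun u => u • v), le_antisymm ?_ ?_⟩
  · rw [Submodule.span_le]
    intro w hw
    obtain ⟨t, ht, rfl⟩ := Finset.mem_image.mp (Finset.mem_coe.mp hw)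
    exact Submodule.subset_span ⟨t, hsB ht, rfl⟩
  · rw [XGamma, Submodule.span_le]
    rintro w ⟨u, hu, rfl⟩
    rw [← hsEq] at hu
    have hmap : Submodule.map (actmap V v) (leftGammaSpan ι ↑s) ≤
        Submodule.restrictScalars k (Submodule.span Γ ((s.image (fun u => u • v) : Finset V) : Set V)) := by
      rw [leftGammaSpan, Submodule.map_span, Submodule.span_le]
      rintro x ⟨y, ⟨γ, t, ht, rfl⟩, rfl⟩
      rw [actmap_apply, mul_smul, ← hsmul]
      exact Submodule.smul_mem _ _
        (Submodule.subset_span (by exact Finset.mem_image_of_mem _ ht))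
    exact hmap ⟨u, hu, rfl⟩

theorem Bm_smul_eq_zero (m' : Ideal Γ) (v : V) (hv : ∀ μ ∈ m', ι μ • v = 0) {w : U}
    (hw : w ∈ Bmspan ι a m') : w • v = 0 := by
  have : Bmspan ι a m' ≤ LinearMap.ker (actmap V v) := by
    rw [Bmspan, Submodule.span_le]
    rintro x ⟨u, hu, μ, hμ, rfl⟩
    rw [SetLike.mem_coe, LinearMap.mem_ker, actmap_apply, mul_smul, hv μ hμ, smul_zero]
  simpa using this hw

theorem nB_smul_mem (hsmul : ∀ (γ : Γ) (w : V), γ • w = ι γ • w) (n : Ideal Γ) (v : V) {w : U}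
    (hw : w ∈ nBspan ι a n) : w • v ∈ n • XGamma ι a V v := by
  have : Submodule.map (actmap V v) (nBspan ι a n) ≤
      Submodule.restrictScalars k (n • XGamma ι a V v) := by
    rw [nBspan, Submodule.map_span, Submodule.span_le]
    rintro x ⟨y, ⟨μ, hμ, u, hu, rfl⟩, rfl⟩
    rw [actmap_apply, mul_smul, ← hsmul]
    have hmem : u • v ∈ XGamma ι a V v := Submodule.subset_span ⟨u, hu, rfl⟩
    have h2 : μ • (u • v) ∈ n • XGamma ι a V v := Submodule.smul_mem_smul hμ hmem
    exact h2
  exact this ⟨w, hw, rfl⟩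

theorem XGamma_le_smul (hsmul : ∀ (γ : Γ) (w : V), γ • w = ι γ • w) (n m : Ideal Γ) (v : V)
    (N : ℕ) (hN : ∀ μ ∈ m ^ (N + 1), ι μ • v = 0)
    (hB : gammaBimod ι a ≤ nBspan ι a n ⊔ Bmspan ι a m) :
    XGamma ι a V v ≤ n • XGamma ι a V v := by
  rw [XGamma, Submodule.span_le]
  rintro w ⟨u, hu, rfl⟩
  obtain ⟨w₁, h₁, w₂, h₂, hu'⟩ := Submodule.mem_sup.mp (key_iterate ι a n m hB N hu)
  rw [← hu', add_smul, Bm_smul_eq_zero ι a V (m ^ (N+1)) v hN h₂, add_zero]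
  exact nB_smul_mem ι a V hsmul n v h₁

theorem nakayama_zero (hsmul : ∀ (γ : Γ) (w : V), γ • w = ι γ • w) (n : Ideal Γ) (v z : V)
    (hfg : (XGamma ι a V v).FG) (hle : XGamma ι a V v ≤ n • XGamma ι a V v)
    (hz : z ∈ XGamma ι a V v) (hzn : ∃ M, ∀ μ ∈ n ^ M, ι μ • z = 0) : z = 0 := by
  obtain ⟨r, hr1, hr0⟩ :=
    Submodule.exists_sub_one_mem_and_smul_eq_zero_of_fg_of_le_smul n (XGamma ι a V v) hfg hle
  have hμn : (1 : Γ) - r ∈ n := by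
    have := n.neg_mem hr1; rwa [neg_sub] at this
  have hfix : ι (1 - r) • z = z := by
    rw [map_sub, map_one, sub_smul, one_smul, ← hsmul, hr0 z hz, sub_zero]
  have hiter : ∀ j : ℕ, ι ((1 - r) ^ j) • z = z := by
    intro j
    induction j with
    | zero => rw [pow_zero, map_one, one_smul]
    | succ j ih => rw [pow_succ, map_mul, mul_smul, hfix, ih]
  obtain ⟨M, hM⟩ := hzn
  rw [← hiter M]
  exact hM _ (Ideal.pow_mem_pow hμn M)

theorem restrict_sub_pow (p : Submodule k V) (u : U) (hu : ∀ x ∈ p, u • x ∈ p) (c : k) (K : ℕ)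
    (x : p) :
    (((((DistribMulAction.toLinearMap k V u).restrict hu) - c • 1) ^ K) x : V)
      = ((u - algebraMap k U c) ^ K) • (x : V) := by
  have hval : ∀ y : p, ((((DistribMulAction.toLinearMap k V u).restrict hu - c • 1) y : p) : V)
      = (u - algebraMap k U c) • (y : V) := by
    intro y
    simp only [LinearMap.sub_apply, LinearMap.smul_apply, Module.End.one_apply]
    rw [Submodule.coe_sub, Submodule.coe_smul]
    change u • (y : V) - c • (y : V) = _
    rw [sub_smul, algebraMap_smul]
  induction K with
  | zero => rw [pow_zero, pow_zero, Module.End.one_apply, one_smul]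
  | succ K ih =>
    rw [pow_succ', pow_succ', Module.End.mul_apply, hval, ih, mul_smul]

theorem xam_iff (m n : Ideal Γ) :
    n ∈ Xam ι a m ↔ n.IsMaximal ∧ ¬ gammaBimod ι a ≤ nBspan ι a n ⊔ Bmspan ι a m :=
  Iff.rfl

theorem part_two [IsAlgClosed k] [Algebra.FiniteType k Γ]
    (hsmul : ∀ (γ : Γ) (w : V), γ • w = ι γ • w)
    (hHC : IsHarishChandra ι) (m : Ideal Γ) (hm : m.IsMaximal) :
    ∀ v ∈ wtSpace V ι m, a • v ∈ ⨆ n ∈ Xam ι a m, wtSpace V ι n := by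
  classical
  obtain ⟨s, hsB, hsEq⟩ := (hHC a).1
  obtain ⟨t, htB, htEq⟩ := (hHC a).2
  obtain ⟨S', hS'⟩ := (inferInstance : Algebra.FiniteType k Γ).out
  intro v hv
  obtain ⟨N₀, hN₀⟩ := hv
  have hN : ∀ μ ∈ m ^ (N₀ + 1), ι μ • v = 0 := fun μ hμ =>
    hN₀ μ (Ideal.pow_le_pow_right (Nat.le_succ N₀) hμ)
  set Xk : Submodule k V := Submodule.map (actmap V v) (gammaBimod ι a) with hXkdef
  have haB : a ∈ gammaBimod ι a := Submodule.subset_span ⟨1, 1, by simp⟩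
  have hav : a • v ∈ Xk := ⟨a, haB, rfl⟩
  -- finite dimensionality of Xk
  obtain ⟨G, hG⟩ := gamma_decomp (k := k) m hm (N₀ + 1)
  set T2 : Set V := (fun p : U × Γ => (p.1 * ι p.2) • v) '' ((t : Set U) ×ˢ (G : Set Γ)) with hT2
  have hfin : T2.Finite := (t.finite_toSet.prod G.finite_toSet).image _
  have hXkle : Xk ≤ Submodule.span k T2 := by
    rw [hXkdef, ← htEq, rightGammaSpan, Submodule.map_span, Submodule.span_le]
    rintro x ⟨y, ⟨γ, t₀, ht₀, rfl⟩, rfl⟩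
    obtain ⟨σ, hσ, hγσ⟩ := hG γ
    have heq : (t₀ * ι γ) • v = (t₀ * ι σ) • v := by
      have h0 : (t₀ * ι (γ - σ)) • v = 0 := by rw [mul_smul, hN _ hγσ, smul_zero]
      have hsplit : t₀ * ι γ = t₀ * ι σ + t₀ * ι (γ - σ) := by
        rw [map_sub, mul_sub]; abel
      rw [hsplit, add_smul, h0, add_zero]
    rw [actmap_apply, heq]
    have hlin : Submodule.map ((actmap V v).comp ((LinearMap.mulLeft k t₀).comp ι.toLinearMap))
        (Submodule.span k (G : Set Γ)) ≤ Submodule.span k T2 := by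
      rw [Submodule.map_span, Submodule.span_le]
      rintro x ⟨b, hb, rfl⟩
      exact Submodule.subset_span ⟨(t₀, b), ⟨ht₀, hb⟩, rfl⟩
    exact hlin ⟨σ, hσ, rfl⟩
  haveI : FiniteDimensional k (Submodule.span k T2) := FiniteDimensional.span_of_finite k hfin
  haveI hFD : FiniteDimensional k ↥Xk := Submodule.finiteDimensional_of_le hXkle
  -- commuting endomorphisms
  have hstab : ∀ γ : Γ, ∀ x ∈ Xk, ι γ • x ∈ Xk := by
    rintro γ x ⟨u, hu, rfl⟩
    exact ⟨ι γ * u, gb_mul_left ι a hu γ, by rw [actmap_apply, actmap_apply, mul_smul]⟩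
  set T : Γ → Module.End k ↥Xk :=
    fun γ => (DistribMulAction.toLinearMap k V (ι γ)).restrict (hstab γ) with hTdef
  have hTval : ∀ (γ : Γ) (y : ↥Xk), ((T γ y : ↥Xk) : V) = ι γ • (y : V) := fun γ y => rfl
  have hcomm : ∀ γ δ : Γ, Commute (T γ) (T δ) := by
    intro γ δ
    refine LinearMap.ext fun x => Subtype.ext ?_
    rw [Module.End.mul_apply, Module.End.mul_apply, hTval, hTval, hTval, hTval,
      ← mul_smul, ← mul_smul, ← map_mul, ← map_mul, mul_comm γ δ]
  have hdec :=
    Module.End.iSup_iInf_maxGenEigenspace_eq_top_of_iSup_maxGenEigenspace_eq_top_of_commute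
      (fun i : {x // x ∈ S'} => T i.1) (fun i j _ => hcomm _ _)
      (fun i => Module.End.iSup_maxGenEigenspace_eq_top _)
  suffices hsuff : Xk ≤ ⨆ n ∈ Xam ι a m, wtSpace V ι n from hsuff hav
  have hXtop : Xk = Submodule.map Xk.subtype ⊤ := by
    rw [Submodule.map_top, Submodule.range_subtype]
  rw [hXtop, ← hdec, Submodule.map_iSup]
  refine iSup_le fun χ => ?_
  set Z := Submodule.map Xk.subtype
    (⨅ i : {x // x ∈ S'}, Module.End.maxGenEigenspace (T i.1) (χ i)) with hZdef
  rcases eq_or_ne Z ⊥ with hbot | hne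
  · rw [hbot]; exact bot_le
  obtain ⟨z₀, hz₀Z, hz₀⟩ := Submodule.exists_mem_ne_zero_of_ne_bot hne
  set sχ : Finset Γ :=
    Finset.image (fun i : {x // x ∈ S'} => i.1 - algebraMap k Γ (χ i)) S'.attach with hsχ
  set nχ : Ideal Γ := Ideal.span (sχ : Set Γ) with hnχ
  have hnil : ∀ z ∈ Z, ∀ e ∈ sχ, ∃ K, ι (e ^ K) • z = 0 := by
    rintro z ⟨x, hx, rfl⟩ e he
    obtain ⟨i, -, rfl⟩ := Finset.mem_image.mp he
    have hxi : x ∈ Module.End.maxGenEigenspace (T i.1) (χ i) :=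
      (Submodule.mem_iInf _).mp hx i
    obtain ⟨K, hK⟩ := (Module.End.mem_maxGenEigenspace _ _ _).mp hxi
    refine ⟨K, ?_⟩
    have hbr := restrict_sub_pow (k := k) V (p := Xk) (ι i.1) (hstab i.1) (χ i) K x
    have hmap : ι (((i : Γ) - algebraMap k Γ (χ i)) ^ K)
        = (ι (i : Γ) - algebraMap k U (χ i)) ^ K := by
      rw [map_pow, map_sub, AlgHom.commutes]
    simp only [Submodule.subtype_apply]
    rw [hmap, ← hbr, hK, ZeroMemClass.coe_zero]
  have hwt : ∀ z ∈ Z, ∃ M, ∀ μ ∈ nχ ^ M, ι μ • z = 0 := by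
    intro z hz
    let Kz : Ideal Γ :=
      { carrier := {μ : Γ | ι μ • z = 0}
        add_mem' := by
          intro x y hx hy
          simp only [Set.mem_setOf_eq] at hx hy ⊢
          rw [map_add, add_smul, hx, hy, add_zero]
        zero_mem' := by simp only [Set.mem_setOf_eq, map_zero, zero_smul]
        smul_mem' := by
          intro γ μ h
          simp only [Set.mem_setOf_eq, smul_eq_mul] at h ⊢
          rw [map_mul, mul_smul, h, smul_zero] }
    obtain ⟨M, hM⟩ := span_pow_le sχ Kz (fun e he => hnil z hz e he)
    exact ⟨M, fun μ hμ => hM hμ⟩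
  have h1 : (1 : Γ) ∉ nχ := by
    intro h1'
    obtain ⟨M, hM⟩ := hwt z₀ hz₀Z
    have htop : nχ ^ M = ⊤ := by
      have hte : nχ = ⊤ := (Ideal.eq_top_iff_one nχ).mpr h1'
      rw [hte, Ideal.top_pow]
    have hz0 : ι (1 : Γ) • z₀ = 0 := hM 1 (htop ▸ Submodule.mem_top)
    rw [map_one, one_smul] at hz0
    exact hz₀ hz0
  have hresχ : ∀ γ ∈ S', ∃ c : k, γ - algebraMap k Γ c ∈ nχ := fun γ hγ =>
    ⟨χ ⟨γ, hγ⟩, Ideal.subset_span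
      (Finset.mem_coe.mpr (Finset.mem_image.mpr ⟨⟨γ, hγ⟩, Finset.mem_attach _ _, rfl⟩))⟩
  have hmax : nχ.IsMaximal := maximal_of_residue nχ h1 (residue_all S' hS' nχ hresχ)
  have hXamχ : nχ ∈ Xam ι a m := by
    rw [xam_iff]
    refine ⟨hmax, fun hBle => ?_⟩
    have hfg := XGamma_fg ι a V hsmul v s hsB hsEq
    have hle := XGamma_le_smul ι a V hsmul nχ m v N₀ hN hBle
    have hzX : z₀ ∈ XGamma ι a V v := by
      obtain ⟨x, -, rfl⟩ := hz₀Z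
      obtain ⟨u, hu, he⟩ := x.2
      exact Submodule.subset_span ⟨u, hu, by rw [Submodule.subtype_apply, ← he, actmap_apply]⟩
    exact hz₀ (nakayama_zero ι a V hsmul nχ v z₀ hfg hle hzX (hwt z₀ hz₀Z))
  have hZwt : Z ≤ wtSpace V ι nχ := fun z hz => hwt z hz
  exact le_trans hZwt (le_iSup₂_of_le nχ hXamχ le_rfl)

theorem part_one [IsAlgClosed k] [Algebra.FiniteType k Γ]
    (hHC : IsHarishChandra ι) (m : Ideal Γ) (hm : m.IsMaximal) : (Xam ι a m).Finite := by
  classical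
  obtain ⟨t, htB, htEq⟩ := (hHC a).2
  by_contra hinf
  have hinf' : (Xam ι a m).Infinite := hinf
  set π := (Bmspan ι a m).mkQ with hπ
  set Bbar := Submodule.span k ((t.image π : Finset (U ⧸ Bmspan ι a m)) : Set (U ⧸ Bmspan ι a m))
    with hBbar
  haveI : FiniteDimensional k ↥Bbar := by rw [hBbar]; infer_instance
  have hres := residue_of_maximal (k := k) m hm
  have hπB : ∀ u ∈ gammaBimod ι a, π u ∈ Bbar := by
    have hcomap : gammaBimod ι a ≤ Submodule.comap π Bbar := by
      rw [← htEq, rightGammaSpan, Submodule.span_le]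
      rintro x ⟨γ, t₀, ht₀, rfl⟩
      show π (t₀ * ι γ) ∈ Bbar
      obtain ⟨c, hc⟩ := hres γ
      have e1 : t₀ * ι γ = c • t₀ + t₀ * ι (γ - algebraMap k Γ c) := by
        rw [map_sub, mul_sub, AlgHom.commutes, ← Algebra.commutes, ← Algebra.smul_def]
        abel
      have e2 : t₀ * ι (γ - algebraMap k Γ c) ∈ Bmspan ι a m :=
        Submodule.subset_span ⟨t₀, htB ht₀, γ - algebraMap k Γ c, hc, rfl⟩
      have e3 : π (t₀ * ι (γ - algebraMap k Γ c)) = 0 := by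
        rw [hπ, Submodule.mkQ_apply]
        exact (Submodule.Quotient.mk_eq_zero _).mpr e2
      rw [e1, map_add, map_smul, e3, add_zero]
      exact Submodule.smul_mem _ _ (Submodule.subset_span
        (Finset.mem_coe.mpr (Finset.mem_image_of_mem _ ht₀)))
    exact fun u hu => hcomap hu
  obtain ⟨F, hFsub, hFcard⟩ := hinf'.exists_subset_card_eq (Module.finrank k ↥Bbar + 1)
  have hmaxF : ∀ n : {x // x ∈ F}, (n.1 : Ideal Γ).IsMaximal := fun n => (hFsub n.2).1
  have hnotle : ∀ n : {x // x ∈ F}, ¬ gammaBimod ι a ≤ nBspan ι a n.1 ⊔ Bmspan ι a m :=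
    fun n => ((xam_iff ι a m n.1).mp (hFsub n.2)).2
  choose u huB huC using fun n : {x // x ∈ F} => SetLike.not_le_iff_exists.mp (hnotle n)
  have hpair : ∀ n n' : {x // x ∈ F}, ∃ g : Γ, n ≠ n' → g ∈ n'.1 ∧ g - 1 ∈ n.1 := by
    intro n n'
    rcases eq_or_ne n n' with rfl | hne
    · exact ⟨0, fun h => absurd rfl h⟩
    have hsup : n.1 ⊔ n'.1 = ⊤ :=
      (hmaxF n).coprime_of_ne (hmaxF n') fun h => hne (Subtype.ext h)
    have h1 : (1 : Γ) ∈ n.1 ⊔ n'.1 := hsup ▸ Submodule.mem_top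
    obtain ⟨y, hy, g, hg, hyg⟩ := Submodule.mem_sup.mp h1
    refine ⟨g, fun _ => ⟨hg, ?_⟩⟩
    have : g - 1 = -y := by rw [← hyg]; ring
    rw [this]
    exact n.1.neg_mem hy
  choose g hg using hpair
  set e : {x // x ∈ F} → Γ := fun n => ∏ n' ∈ Finset.univ.erase n, g n n' with he
  have he1 : ∀ n n' : {x // x ∈ F}, n' ≠ n → e n ∈ n'.1 := by
    intro n n' hne
    show (∏ n'' ∈ Finset.univ.erase n, g n n'') ∈ n'.1
    rw [← Finset.mul_prod_erase _ _ (Finset.mem_erase.mpr ⟨hne, Finset.mem_univ _⟩)]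
    exact Ideal.mul_mem_right _ _ ((hg n n' hne.symm).1)
  have he2 : ∀ n, e n - 1 ∈ n.1 := fun n =>
    prod_sub_one_mem n.1 _ _ fun n' hn' => (hg n n' (Finset.ne_of_mem_erase hn').symm).2
  set w : {x // x ∈ F} → U := fun n => ι (e n) * u n with hw
  have hwB : ∀ n, w n ∈ gammaBimod ι a := fun n => gb_mul_left ι a (huB n) (e n)
  have hwC : ∀ n n' : {x // x ∈ F}, n' ≠ n → w n ∈ nBspan ι a n'.1 ⊔ Bmspan ι a m :=
    fun n n' hne =>
      Submodule.mem_sup_left (Submodule.subset_span ⟨e n, he1 n n' hne, u n, huB n, rfl⟩)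
  have hwout : ∀ n, w n ∉ nBspan ι a n.1 ⊔ Bmspan ι a m := by
    intro n hmem
    apply huC n
    have hwu : u n = w n - ι (e n - 1) * u n := by
      show u n = ι (e n) * u n - ι (e n - 1) * u n
      rw [map_sub, map_one, sub_mul, one_mul]
      abel
    rw [hwu]
    exact Submodule.sub_mem _ hmem
      (Submodule.mem_sup_left (Submodule.subset_span ⟨e n - 1, he2 n, u n, huB n, rfl⟩))
  set wb : {x // x ∈ F} → ↥Bbar := fun n => ⟨π (w n), hπB _ (hwB n)⟩ with hwb
  have hLI : LinearIndependent k wb := by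
    rw [Fintype.linearIndependent_iff]
    intro c hc i₀
    by_contra hc0
    have hsum : π (∑ n, c n • w n) = 0 := by
      have hval := congrArg (Subtype.val) hc
      push_cast at hval
      rw [map_sum]
      simpa [hwb, map_smul] using hval
    have hker : (∑ n, c n • w n) ∈ Bmspan ι a m := by
      rw [← Submodule.ker_mkQ (Bmspan ι a m)]
      exact LinearMap.mem_ker.mpr hsum
    have hmem : c i₀ • w i₀ ∈ nBspan ι a i₀.1 ⊔ Bmspan ι a m := by
      have hsplit : c i₀ • w i₀ = (∑ n, c n • w n) - ∑ n ∈ Finset.univ.erase i₀, c n • w n := by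
        rw [← Finset.add_sum_erase _ _ (Finset.mem_univ i₀)]
        abel
      rw [hsplit]
      refine Submodule.sub_mem _ (Submodule.mem_sup_right hker)
        (Submodule.sum_mem _ fun n hn => Submodule.smul_mem _ _ ?_)
      exact hwC n i₀ (Finset.ne_of_mem_erase hn).symm
    have hout : w i₀ ∈ nBspan ι a i₀.1 ⊔ Bmspan ι a m := by
      have := Submodule.smul_mem _ (c i₀)⁻¹ hmem
      rwa [smul_smul, inv_mul_cancel₀ hc0, one_smul] at this
    exact hwout i₀ hout
  have hcard := hLI.fintype_card_le_finrank
  rw [Fintype.card_coe, hFcard] at hcard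
  omega

end Aux

/-- Let `Γ` be a commutative finitely generated Harish-Chandra
subalgebra of `U`, `M` a Gelfand-Tsetlin `U`-module, `a ∈ U`, and `m ∈ Specm Γ`.  Then
`X_a(m)` is finite and `a·M(m) ⊆ Σ_{n ∈ X_a(m)} M(n)`. -/
theorem gelfand_tsetlin_action_on_weight_space
    (k Γ U : Type*) [Field k] [IsAlgClosed k] [CharZero k]
    [CommRing Γ] [Algebra k Γ] [Algebra.FiniteType k Γ]
    [Ring U] [Algebra k U]
    (ι : Γ →ₐ[k] U) (hinj : Function.Injective ι) (hHC : IsHarishChandra ι)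
    (V : Type*) [AddCommGroup V] [Module k V] [Module U V] [IsScalarTower k U V]
    (hfg : ∃ s : Finset V, Submodule.span U (↑s : Set V) = ⊤)
    (hGT : (⨆ m ∈ {m : Ideal Γ | m.IsMaximal}, wtSpace V ι m) = ⊤)
    (a : U) (m : Ideal Γ) (hm : m.IsMaximal) :
    (Xam ι a m).Finite ∧
      ∀ v ∈ wtSpace V ι m, a • v ∈ ⨆ n ∈ Xam ι a m, wtSpace V ι n := by
  letI : Module Γ V := Module.compHom V (ι.toRingHom : Γ →+* U)
  have hsmul : ∀ (γ : Γ) (w : V), γ • w = ι γ • w := fun _ _ => rfl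
  haveI : IsScalarTower k Γ V := by
    constructor
    intro c γ w
    rw [hsmul, hsmul, Algebra.smul_def, map_mul, AlgHom.commutes, mul_smul, algebraMap_smul]
  exact ⟨part_one ι a hHC m hm, part_two ι a V hsmul hHC m hm⟩
end

section
/- Let Γ be a commutative finitely generated Harish-Chandra subalgebra of U and X a finite-dimensional Γ-module. Then the induced module U ⊗_Γ X is a Gelfand-Tsetlin U-module, i.e. its restriction to Γ decomposes as a direct sum of generalized weight spaces over Specm Γ. -/
open TensorProduct

/-! ### Auxiliary lemmas -/

section AuxIdeal

/-- For a finite pairwise-coprime family of ideals, the infimum equals the product. -/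
theorem aux_inf_eq_prod {R : Type*} [CommRing R] {ι : Type*} [Fintype ι]
    (f : ι → Ideal R) (h : Pairwise fun i j => IsCoprime (f i) (f j)) :
    (⨅ i, f i) = ∏ i, f i := by
  classical
  have key : ∀ s : Finset ι, (⨅ i ∈ s, f i) = ∏ i ∈ s, f i := by
    intro s
    induction s using Finset.cons_induction with
    | empty => simp [Ideal.one_eq_top]
    | cons a s ha ih =>
      have hcop : IsCoprime (f a) (∏ i ∈ s, f i) :=
        IsCoprime.prod_right fun i hi => h (fun hai => ha (hai ▸ hi))
      rw [Finset.prod_cons, Ideal.mul_eq_inf_of_coprime (Ideal.isCoprime_iff_sup_eq.mp hcop),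
        ← ih]
      simp only [Finset.cons_eq_insert, Finset.mem_insert]
      rw [show (⨅ i, ⨅ (_h : i = a ∨ i ∈ s), f i) = (⨅ i, ⨅ (_h : i = a), f i) ⊓ ⨅ i ∈ s, f i by
        simp [iInf_or, iInf_inf_eq], iInf_iInf_eq_left]
  have := key Finset.univ
  simpa using this

end AuxIdeal

section AuxWt

variable {k Γ U : Type*} [Field k] [CommRing Γ] [Algebra k Γ] [Ring U] [Algebra k U]
variable {V : Type*} [AddCommGroup V] [Module k V] [Module U V] [IsScalarTower k U V]

/-- The `k`-linear endomorphism of `V` given by the action of `ι γ`. -/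
def actL (ι : Γ →ₐ[k] U) (γ : Γ) : V →ₗ[k] V where
  toFun v := ι γ • v
  map_add' := smul_add _
  map_smul' c v := by
    simp only [RingHom.id_apply]
    rw [← algebraMap_smul U c v, smul_smul, ← Algebra.commutes, ← smul_smul,
      algebraMap_smul]

@[simp] theorem actL_apply (ι : Γ →ₐ[k] U) (γ : Γ) (v : V) : actL ι γ v = ι γ • v := rfl

/-- The action of `Γ` on an invariant subspace `W`, as an algebra homomorphism. -/
def actAlg (ι : Γ →ₐ[k] U) (W : Submodule k V)
    (hW : ∀ γ : Γ, ∀ x ∈ W, actL ι γ x ∈ W) : Γ →ₐ[k] Module.End k ↥W where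
  toFun γ := (actL ι γ).restrict (hW γ)
  map_one' := by
    ext w
    simp [LinearMap.restrict_apply, Module.End.one_apply]
  map_mul' γ δ := by
    ext w
    simp [LinearMap.restrict_apply, Module.End.mul_apply, map_mul, mul_smul]
  map_zero' := by
    ext w
    simp [LinearMap.restrict_apply]
  map_add' γ δ := by
    ext w
    simp [LinearMap.restrict_apply, map_add, add_smul]
  commutes' c := by
    ext w
    simp [LinearMap.restrict_apply, Module.algebraMap_end_apply, algebraMap_smul]

theorem actAlg_zero_iff (ι : Γ →ₐ[k] U) (W : Submodule k V)
    (hW : ∀ γ : Γ, ∀ x ∈ W, actL ι γ x ∈ W) (γ : Γ) (h : actAlg ι W hW γ = 0) :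
    ∀ w ∈ W, ι γ • w = 0 := by
  intro w hw
  have h5 := congrFun (congrArg (fun f : Module.End k ↥W => (f : ↥W → ↥W)) h) ⟨w, hw⟩
  have h6 := congrArg Subtype.val h5
  simpa [actAlg, LinearMap.restrict_apply] using h6

/-- Any element of a finite-dimensional `Γ`-invariant subspace lies in the sum of the
generalized weight spaces. -/
theorem mem_biSup_wtSpace (ι : Γ →ₐ[k] U) (W : Submodule k V) [FiniteDimensional k ↥W]
    (hW : ∀ γ : Γ, ∀ x ∈ W, actL ι γ x ∈ W) {v : V} (hv : v ∈ W) :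
    v ∈ ⨆ m ∈ {m : Ideal Γ | m.IsMaximal}, wtSpace V ι m := by
  classical
  set ΦA : Γ →ₐ[k] Module.End k ↥W := actAlg ι W hW with hΦA
  set I : Ideal Γ := RingHom.ker ΦA.toRingHom with hI
  -- `Γ ⧸ I` is a commutative, finite-dimensional, hence Artinian, ring
  haveI : FiniteDimensional k (Γ ⧸ I) := by
    refine FiniteDimensional.of_injective
      (Ideal.Quotient.liftₐ I ΦA (fun a ha => ha)).toLinearMap ?_
    intro x y hxy
    obtain ⟨a, rfl⟩ := Ideal.Quotient.mk_surjective x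
    obtain ⟨b, rfl⟩ := Ideal.Quotient.mk_surjective y
    simp only [AlgHom.toLinearMap_apply, Ideal.Quotient.liftₐ_apply,
      Ideal.Quotient.lift_mk] at hxy
    rw [Ideal.Quotient.eq]
    refine RingHom.mem_ker.mpr ?_
    show ΦA (a - b) = 0
    rw [map_sub, show ΦA a = ΦA b from hxy, sub_self]
  haveI : IsArtinianRing (Γ ⧸ I) := isArtinian_of_tower k inferInstance
  let Φ' : Γ →+* Γ ⧸ I := Ideal.Quotient.mk I
  have hΦ'surj : Function.Surjective Φ' := Ideal.Quotient.mk_surjective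
  have hker : ∀ γ : Γ, Φ' γ = 0 → ∀ w ∈ W, ι γ • w = 0 := by
    intro γ hγ
    have hmem : γ ∈ I := by rwa [← Ideal.Quotient.eq_zero_iff_mem (I := I)]
    have h0 : ΦA γ = 0 := RingHom.mem_ker.mp hmem
    exact actAlg_zero_iff ι W hW γ h0
  obtain ⟨N, hN⟩ := IsArtinianRing.isNilpotent_jacobson_bot (R := Γ ⧸ I)
  have hfin : ({n : Ideal (Γ ⧸ I) | n.IsMaximal}).Finite :=
    IsArtinianRing.setOfPred_isMaximal_finite (Γ ⧸ I)
  haveI : Finite ↥{n : Ideal (Γ ⧸ I) | n.IsMaximal} := hfin.to_subtype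
  haveI := hfin.fintype
  set τ := {n : Ideal (Γ ⧸ I) | n.IsMaximal} with hτ
  let fI : ↥τ → Ideal Γ := fun n => (Ideal.comap Φ' (n : Ideal (Γ ⧸ I))) ^ N
  have hjac : (⨅ n : ↥τ, Ideal.comap Φ' (n : Ideal (Γ ⧸ I))) =
      Ideal.comap Φ' (Ideal.jacobson ⊥) := by
    rw [← Ideal.comap_iInf]
    congr 1
    have : Ideal.jacobson (⊥ : Ideal (Γ ⧸ I)) = sInf τ := by
      unfold Ideal.jacobson
      congr 1
      ext J
      simp [hτ]
    rw [this, sInf_eq_iInf']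
  have hmax : ∀ n : ↥τ, (Ideal.comap Φ' (n : Ideal (Γ ⧸ I))).IsMaximal := fun n => by
    haveI : (n : Ideal (Γ ⧸ I)).IsMaximal := n.2
    exact Ideal.comap_isMaximal_of_surjective Φ' hΦ'surj
  have hpair : Pairwise fun i j : ↥τ => IsCoprime (fI i) (fI j) := by
    intro i j hij
    refine IsCoprime.pow ?_
    rw [Ideal.isCoprime_iff_sup_eq]
    refine (hmax i).coprime_of_ne (hmax j) ?_
    intro hcomap
    apply hij
    refine Subtype.ext ?_
    rw [← Ideal.map_comap_of_surjective Φ' hΦ'surj (i : Ideal (Γ ⧸ I)), hcomap,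
      Ideal.map_comap_of_surjective Φ' hΦ'surj]
  -- anything in `⨅ fI` kills `W`
  have hkill : ∀ γ ∈ (⨅ n : ↥τ, fI n), ∀ w ∈ W, ι γ • w = 0 := by
    intro γ hγ w hw
    have h1 : (⨅ n : ↥τ, fI n) ≤ (Ideal.comap Φ' (Ideal.jacobson ⊥)) ^ N := by
      rw [aux_inf_eq_prod fI hpair]
      calc (∏ n : ↥τ, fI n) = (∏ n : ↥τ, Ideal.comap Φ' (n : Ideal (Γ ⧸ I))) ^ N := by
            rw [← Finset.prod_pow]
        _ ≤ (⨅ n : ↥τ, Ideal.comap Φ' (n : Ideal (Γ ⧸ I))) ^ N := by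
            refine Ideal.pow_right_mono ?_ N
            refine le_iInf fun n => ?_
            exact le_trans Ideal.prod_le_inf (Finset.inf_le (Finset.mem_univ n))
        _ = (Ideal.comap Φ' (Ideal.jacobson ⊥)) ^ N := by rw [hjac]
    have h2 : Φ' γ ∈ (Ideal.jacobson (⊥ : Ideal (Γ ⧸ I))) ^ N := by
      have : Φ' γ ∈ Ideal.map Φ' ((Ideal.comap Φ' (Ideal.jacobson ⊥)) ^ N) :=
        Ideal.mem_map_of_mem Φ' (h1 hγ)
      rwa [Ideal.map_pow, Ideal.map_comap_of_surjective Φ' hΦ'surj] at this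
    rw [hN] at h2
    exact hker γ (by simpa using h2) w hw
  -- CRT elements
  have hcrt : ∀ i : ↥τ, ∃ e : Γ, (e - 1) ∈ fI i ∧ ∀ j : ↥τ, j ≠ i → e ∈ fI j := by
    intro i
    obtain ⟨e, he⟩ := Ideal.pi_quotient_surjective hpair (Pi.single i 1)
    refine ⟨e, ?_, ?_⟩
    · have hei := he i
      rw [Pi.single_eq_same] at hei
      rw [← Ideal.Quotient.eq_zero_iff_mem, map_sub, hei, map_one, sub_self]
    · intro j hj
      have hej := he j
      rw [Pi.single_eq_of_ne hj] at hej
      rwa [← Ideal.Quotient.eq_zero_iff_mem]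
  choose e he1 he2 using hcrt
  -- decomposition of v
  have hdec : v = ∑ i : ↥τ, ι (e i) • v := by
    have hmem : (1 - ∑ i : ↥τ, e i) ∈ ⨅ n : ↥τ, fI n := by
      rw [Submodule.mem_iInf]
      intro j
      have hsplit : (1 - ∑ i : ↥τ, e i) = -(e j - 1) - ∑ i ∈ Finset.univ.erase j, e i := by
        rw [← Finset.add_sum_erase _ _ (Finset.mem_univ j)]; ring
      rw [hsplit]
      refine Submodule.sub_mem _ ((fI j).neg_mem (he1 j)) ?_
      refine Submodule.sum_mem _ fun i hi => ?_
      exact he2 i j (Finset.mem_erase.mp hi).1.symm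
    have h0 : ι (1 - ∑ i : ↥τ, e i) • v = 0 := hkill _ hmem v hv
    rw [map_sub, map_one, sub_smul, one_smul, map_sum, Finset.sum_smul] at h0
    exact (sub_eq_zero.mp h0)
  rw [hdec]
  refine Submodule.sum_mem _ fun i _ => ?_
  have hwt : ι (e i) • v ∈ wtSpace V ι (Ideal.comap Φ' (i : Ideal (Γ ⧸ I))) := by
    refine ⟨N, fun μ hμ => ?_⟩
    rw [smul_smul, ← map_mul]
    refine hkill _ ?_ v hv
    rw [Submodule.mem_iInf]
    intro j
    by_cases hji : j = i
    · subst hji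
      exact Ideal.mul_mem_right _ _ hμ
    · exact Ideal.mul_mem_left _ _ (he2 i j hji)
  exact (le_iSup₂ (f := fun m (_ : m ∈ {m : Ideal Γ | m.IsMaximal}) => wtSpace V ι m)
    (Ideal.comap Φ' (i : Ideal (Γ ⧸ I))) (hmax i)) hwt

end AuxWt

section AuxHC
variable {k Γ U : Type*} [Field k] [CommRing Γ] [Algebra k Γ] [Ring U] [Algebra k U]

theorem gammaBimod_mul_left (ι : Γ →ₐ[k] U) (a : U) (γ : Γ) {z : U}
    (hz : z ∈ gammaBimod ι a) : ι γ * z ∈ gammaBimod ι a := by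
  induction hz using Submodule.span_induction with
  | mem x hx =>
    obtain ⟨γ₁, γ₂, rfl⟩ := hx
    refine Submodule.subset_span ⟨γ * γ₁, γ₂, ?_⟩
    rw [map_mul]; simp [mul_assoc]
  | zero => simpa using (gammaBimod ι a).zero_mem
  | add x y _ _ hx hy => simpa [mul_add] using (gammaBimod ι a).add_mem hx hy
  | smul c x _ hx => simpa [Algebra.mul_smul_comm] using (gammaBimod ι a).smul_mem c hx

end AuxHC

/-- Let `Γ` be a commutative finitely generated Harish-Chandra
subalgebra of `U` and `X` a finite-dimensional `Γ`-module (given by `ρ`).  Then the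
induced module `U ⊗_Γ X` (realized as the quotient of `U ⊗_k X` by the relations
`(u·γ) ⊗ x = u ⊗ (γ·x)`) is a Gelfand-Tsetlin `U`-module: it is finitely generated and
its restriction to `Γ` is the direct sum of its generalized weight spaces. -/
theorem induced_module_is_gelfand_tsetlin
    (k Γ U : Type*) [Field k] [IsAlgClosed k] [CharZero k]
    [CommRing Γ] [Algebra k Γ] [Algebra.FiniteType k Γ]
    [Ring U] [Algebra k U]
    (ι : Γ →ₐ[k] U) (hinj : Function.Injective ι) (hHC : IsHarishChandra ι)
    (X : Type*) [AddCommGroup X] [Module k X] [FiniteDimensional k X]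
    (ρ : Γ →ₐ[k] Module.End k X) :
    let J : Submodule U (U ⊗[k] X) :=
      Submodule.span U {z : U ⊗[k] X | ∃ (u : U) (γ : Γ) (x : X),
        z = (u * ι γ) ⊗ₜ[k] x - u ⊗ₜ[k] (ρ γ x)}
    (∃ s : Finset ((U ⊗[k] X) ⧸ J),
        Submodule.span U (↑s : Set ((U ⊗[k] X) ⧸ J)) = ⊤) ∧
      (⨆ m ∈ {m : Ideal Γ | m.IsMaximal}, wtSpace ((U ⊗[k] X) ⧸ J) ι m) = ⊤ := by
  classical
  intro J
  set M := (U ⊗[k] X) ⧸ J with hM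
  -- the k-linear quotient map
  let q : U ⊗[k] X →ₗ[k] M := LinearMap.restrictScalars k J.mkQ
  have hq : ∀ z : U ⊗[k] X, q z = J.mkQ z := fun _ => rfl
  constructor
  · -- finite generation
    obtain ⟨sX, hsX⟩ : ∃ s : Finset X, Submodule.span k (↑s : Set X) = ⊤ :=
      Module.Finite.fg_top (R := k) (M := X)
    refine ⟨sX.image (fun x => J.mkQ ((1 : U) ⊗ₜ[k] x)), ?_⟩
    rw [eq_top_iff]
    rintro v -
    obtain ⟨z, rfl⟩ := J.mkQ_surjective v
    set S : Submodule U M := Submodule.span U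
      (↑(sX.image (fun x => J.mkQ ((1 : U) ⊗ₜ[k] x))) : Set M) with hS
    have h1x : ∀ x : X, J.mkQ ((1 : U) ⊗ₜ[k] x) ∈ S := by
      intro x
      have hle : Submodule.span k (↑sX : Set X) ≤
          Submodule.comap ((LinearMap.restrictScalars k J.mkQ).comp
            (TensorProduct.mk k U X 1)) (S.restrictScalars k) := by
        rw [Submodule.span_le]
        intro y hy
        exact Submodule.subset_span (Finset.mem_image_of_mem _ hy)
      have := hle (hsX ▸ Submodule.mem_top (x := x))
      simpa using this
    induction z using TensorProduct.induction_on with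
    | zero => simpa using S.zero_mem
    | tmul u x =>
      have : u ⊗ₜ[k] x = u • ((1 : U) ⊗ₜ[k] x) := by
        rw [TensorProduct.smul_tmul', smul_eq_mul, mul_one]
      rw [this, map_smul]
      exact S.smul_mem u (h1x x)
    | add z₁ z₂ h₁ h₂ => rw [map_add]; exact S.add_mem h₁ h₂
  · -- sum of weight spaces
    -- every element of `M` lies in a finite-dimensional invariant subspace
    have main : ∀ z : U ⊗[k] X, ∃ W : Submodule k M,
        (∀ γ : Γ, ∀ x ∈ W, actL ι γ x ∈ W) ∧ FiniteDimensional k ↥W ∧ J.mkQ z ∈ W := by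
      intro z
      induction z using TensorProduct.induction_on with
      | zero => exact ⟨⊥, by simp, inferInstance, by simp⟩
      | tmul u x =>
        obtain ⟨t, hts, htspan⟩ := (hHC u).2
        set W : Submodule k M := ⨆ w : {y : U // y ∈ t},
          LinearMap.range ((LinearMap.restrictScalars k J.mkQ).comp
            (TensorProduct.mk k U X w.1)) with hW
        haveI : FiniteDimensional k ↥W := inferInstance
        -- core claim
        have claim : ∀ z₀ ∈ rightGammaSpan ι (↑t : Set U), ∀ y : X, J.mkQ (z₀ ⊗ₜ[k] y) ∈ W := by
          intro z₀ hz₀ y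
          have hle : rightGammaSpan ι (↑t : Set U) ≤
              Submodule.comap ((LinearMap.restrictScalars k J.mkQ).comp
                ((TensorProduct.mk k U X).flip y)) W := by
            rw [rightGammaSpan, Submodule.span_le]
            rintro _ ⟨γ, w, hwt, rfl⟩
            have hrel : (w * ι γ) ⊗ₜ[k] y - w ⊗ₜ[k] (ρ γ y) ∈ J :=
              Submodule.subset_span ⟨w, γ, y, rfl⟩
            have heq : J.mkQ ((w * ι γ) ⊗ₜ[k] y) = J.mkQ (w ⊗ₜ[k] (ρ γ y)) := by
              rw [Submodule.mkQ_apply, Submodule.mkQ_apply, Submodule.Quotient.eq]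
              exact hrel
            have hmem : J.mkQ (w ⊗ₜ[k] (ρ γ y)) ∈ W := by
              refine Submodule.mem_iSup_of_mem ⟨w, hwt⟩ ?_
              exact ⟨ρ γ y, rfl⟩
            simpa [heq] using hmem
          simpa using hle hz₀
        have humem : u ∈ rightGammaSpan ι (↑t : Set U) := by
          rw [htspan]
          exact Submodule.subset_span ⟨1, 1, by simp⟩
        have hmemW : J.mkQ (u ⊗ₜ[k] x) ∈ W := claim u humem x
        refine ⟨W, ?_, inferInstance, hmemW⟩
        -- invariance
        intro γ m hm
        have hle2 : W ≤ Submodule.comap (actL ι γ) W := by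
          rw [hW]
          refine iSup_le fun w => ?_
          rintro _ ⟨y, rfl⟩
          simp only [Submodule.mem_comap, actL_apply, LinearMap.coe_comp,
            LinearMap.coe_restrictScalars, Function.comp_apply, TensorProduct.mk_apply]
          have hsm : ι γ • J.mkQ (w.1 ⊗ₜ[k] y) = J.mkQ ((ι γ * w.1) ⊗ₜ[k] y) := by
            rw [← map_smul, TensorProduct.smul_tmul', smul_eq_mul]
          rw [hsm]
          have : ι γ * w.1 ∈ rightGammaSpan ι (↑t : Set U) := by
            rw [htspan]
            exact gammaBimod_mul_left ι u γ (hts w.2)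
          exact claim _ this y
        exact hle2 hm
      | add z₁ z₂ h₁ h₂ =>
        obtain ⟨W₁, hinv₁, hfd₁, hm₁⟩ := h₁
        obtain ⟨W₂, hinv₂, hfd₂, hm₂⟩ := h₂
        haveI := hfd₁; haveI := hfd₂
        refine ⟨W₁ ⊔ W₂, ?_, inferInstance, ?_⟩
        · intro γ x hx
          obtain ⟨x₁, hx₁, x₂, hx₂, rfl⟩ := Submodule.mem_sup.mp hx
          rw [map_add]
          exact Submodule.add_mem _
            (Submodule.mem_sup_left (hinv₁ γ x₁ hx₁))
            (Submodule.mem_sup_right (hinv₂ γ x₂ hx₂))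
        · rw [map_add]
          exact Submodule.add_mem _ (Submodule.mem_sup_left hm₁)
            (Submodule.mem_sup_right hm₂)
    rw [eq_top_iff]
    rintro v -
    obtain ⟨z, rfl⟩ := J.mkQ_surjective v
    obtain ⟨W, hinv, hfd, hmem⟩ := main z
    haveI := hfd
    exact mem_biSup_wtSpace ι W hinv hmem
end

section
/- Let X, X' be Gelfand-Tsetlin U-modules whose supports lie in different Δ-equivalence classes D and D' of Specm Γ. Then Hom_U(X, X') = 0 and Ext¹_U(X, X') = 0; consequently the category of Gelfand-Tsetlin modules decomposes as the direct sum of its blocks indexed by Δ-classes. -/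
set_option linter.unusedSectionVars false
set_option linter.unusedVariables false
set_option maxHeartbeats 1000000


universe u

section
variable {k Γ U : Type*} [Field k] [CommRing Γ] [Algebra k Γ] [Ring U] [Algebra k U]

/-- The basic relation generating the Δ-equivalence on `Specm Γ`:
`(m, n)` are related iff `n ∈ X_a(m)` for some `a ∈ U`, i.e.
`Γ/n ⊗_Γ ΓaΓ ⊗_Γ Γ/m ≠ 0`. -/
def deltaRel (ι : Γ →ₐ[k] U) (m n : Ideal Γ) : Prop :=
  m.IsMaximal ∧ n.IsMaximal ∧ ∃ a : U,
    ¬ gammaBimod ι a ≤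
      Submodule.span k {x | ∃ μ ∈ n, ∃ u ∈ (gammaBimod ι a : Set U), x = ι μ * u} ⊔
      Submodule.span k {x | ∃ u ∈ (gammaBimod ι a : Set U), ∃ μ ∈ m, x = u * ι μ}

variable (V : Type*) [AddCommGroup V] [Module k V] [Module U V] [IsScalarTower k U V]

/-- `V` is a Gelfand-Tsetlin module. -/
def IsGelfandTsetlin (ι : Γ →ₐ[k] U) : Prop :=
  (∃ s : Finset V, Submodule.span U (↑s : Set V) = ⊤) ∧
    (⨆ m ∈ {m : Ideal Γ | m.IsMaximal}, wtSpace V ι m) = ⊤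

end

section Aux

variable {k Γ U : Type*} [Field k] [CommRing Γ] [Algebra k Γ] [Ring U] [Algebra k U]
variable (ι : Γ →ₐ[k] U)
variable {V : Type*} [AddCommGroup V] [Module k V] [Module U V] [IsScalarTower k U V]
variable {W : Type*} [AddCommGroup W] [Module k W] [Module U W] [IsScalarTower k U W]

lemma usmul_ksmul (u : U) (c : k) (v : V) : u • c • v = c • (u • v) := by
  rw [← algebraMap_smul U c v, smul_smul, ← Algebra.commutes, mul_smul, algebraMap_smul]

/-- scalar action of `u : U` as a `k`-linear map. -/
def uSmulL (u : U) : V →ₗ[k] V where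
  toFun := (u • ·)
  map_add' := fun v w => smul_add u v w
  map_smul' := fun c v => usmul_ksmul u c v

@[simp] lemma uSmulL_apply (u : U) (v : V) : (uSmulL u : V →ₗ[k] V) v = u • v := rfl

lemma iota_mul_smul (γ δ : Γ) (v : V) : ι (γ * δ) • v = ι γ • ι δ • v := by
  rw [map_mul, mul_smul]

lemma iota_smul_comm (γ δ : Γ) (v : V) : ι γ • ι δ • v = ι δ • ι γ • v := by
  rw [← iota_mul_smul, mul_comm, iota_mul_smul]

variable (V) in
/-- vectors killed by `ι(m^M)`. -/
def wtBdd (m : Ideal Γ) (M : ℕ) : Submodule k V where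
  carrier := {v | ∀ μ ∈ m ^ M, ι μ • v = 0}
  add_mem' := by
    rintro v w hv hw
    intro μ hμ
    rw [smul_add, hv μ hμ, hw μ hμ, add_zero]
  zero_mem' := fun μ _ => smul_zero _
  smul_mem' := by
    rintro c v hv μ hμ
    rw [usmul_ksmul, hv μ hμ, smul_zero]

lemma mem_wtBdd {m : Ideal Γ} {M : ℕ} {v : V} :
    v ∈ wtBdd ι V m M ↔ ∀ μ ∈ m ^ M, ι μ • v = 0 := Iff.rfl

lemma mem_wtSpace {m : Ideal Γ} {v : V} :
    v ∈ wtSpace V ι m ↔ ∃ M : ℕ, v ∈ wtBdd ι V m M := Iff.rfl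

lemma wtBdd_le_wtSpace {m : Ideal Γ} {M : ℕ} : wtBdd ι V m M ≤ wtSpace V ι m :=
  fun _ hv => ⟨M, hv⟩

lemma wtBdd_mono {m : Ideal Γ} {M M' : ℕ} (h : M ≤ M') : wtBdd ι V m M ≤ wtBdd ι V m M' :=
  fun v hv μ hμ => hv μ (Ideal.pow_le_pow_right h hμ)

lemma iota_smul_mem_wtBdd {m : Ideal Γ} {M : ℕ} {v : V} (γ : Γ) (hv : v ∈ wtBdd ι V m M) :
    ι γ • v ∈ wtBdd ι V m M := by
  intro μ hμ
  rw [← iota_mul_smul, mul_comm, iota_mul_smul, hv μ hμ, smul_zero]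

lemma iota_smul_mem_wtSpace {m : Ideal Γ} {v : V} (γ : Γ) (hv : v ∈ wtSpace V ι m) :
    ι γ • v ∈ wtSpace V ι m := by
  obtain ⟨M, hM⟩ := hv
  exact ⟨M, iota_smul_mem_wtBdd ι γ hM⟩

lemma map_mem_wtBdd {m : Ideal Γ} {M : ℕ} {v : V} (f : V →ₗ[U] W)
    (hv : v ∈ wtBdd ι V m M) : f v ∈ wtBdd ι W m M := by
  intro μ hμ
  rw [← map_smul, hv μ hμ, map_zero]

lemma map_mem_wtSpace {m : Ideal Γ} {v : V} (f : V →ₗ[U] W)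
    (hv : v ∈ wtSpace V ι m) : f v ∈ wtSpace W ι m := by
  obtain ⟨M, hM⟩ := hv
  exact ⟨M, map_mem_wtBdd ι f hM⟩

/-- the annihilator of `v` in `Γ`. -/
def annGamma (v : V) : Ideal Γ where
  carrier := {μ | ι μ • v = 0}
  add_mem' := by
    intro a b ha hb
    show ι (a + b) • v = 0
    rw [map_add, add_smul, ha, hb, add_zero]
  zero_mem' := by show ι 0 • v = 0; rw [map_zero, zero_smul]
  smul_mem' := by
    intro c a ha
    show ι (c * a) • v = 0
    rw [iota_mul_smul, ha, smul_zero]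

lemma mem_annGamma {v : V} {μ : Γ} : μ ∈ annGamma ι v ↔ ι μ • v = 0 := Iff.rfl

/-- CRT-type element. -/
lemma exists_crt [DecidableEq (Ideal Γ)] {m : Ideal Γ} (hm : m.IsMaximal) (N : ℕ) (s : Finset (Ideal Γ))
    (hmax : ∀ n ∈ s, (n : Ideal Γ).IsMaximal) (hne : ∀ n ∈ s, n ≠ m) (M : ℕ) :
    ∃ γ δ : Γ, γ ∈ m ^ N ∧ δ ∈ ∏ n ∈ s, n ^ M ∧ γ + δ = 1 := by
  have hcop : IsCoprime (m ^ N) (∏ n ∈ s, n ^ M) := by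
    refine IsCoprime.prod_right (fun n hn => ?_)
    refine IsCoprime.pow ?_
    rw [Ideal.isCoprime_iff_sup_eq]
    exact hm.coprime_of_ne (hmax n hn) (Ne.symm (hne n hn))
  obtain ⟨γ, hγ, δ, hδ, h⟩ := Ideal.isCoprime_iff_exists.mp hcop
  exact ⟨γ, δ, hγ, hδ, h⟩

lemma prod_pow_le_of_mem {s : Finset (Ideal Γ)} {n : Ideal Γ} (hn : n ∈ s) (M : ℕ) :
    (∏ n ∈ s, n ^ M) ≤ n ^ M :=
  le_trans Ideal.prod_le_inf (Finset.inf_le hn)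

/-- independence of generalized weight spaces. -/
lemma wt_indep (s : Finset (Ideal Γ)) (hmax : ∀ n ∈ s, (n : Ideal Γ).IsMaximal)
    (c : Ideal Γ → V) (hc : ∀ n ∈ s, c n ∈ wtSpace V ι n)
    (hsum : ∑ n ∈ s, c n = 0) : ∀ n ∈ s, c n = 0 := by
  intro n₀ hn₀
  classical
  -- choose exponents
  have hex : ∀ n ∈ s, ∃ M, c n ∈ wtBdd ι V n M := fun n hn => hc n hn
  choose! Mf hMf using hex
  set M := s.sup Mf with hM
  have hMb : ∀ n ∈ s, c n ∈ wtBdd ι V n M :=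
    fun n hn => wtBdd_mono ι (Finset.le_sup hn) (hMf n hn)
  obtain ⟨γ, δ, hγ, hδ, hγδ⟩ := exists_crt (hmax n₀ hn₀) M (s.erase n₀)
    (fun n hn => hmax n (Finset.mem_of_mem_erase hn))
    (fun n hn => Finset.ne_of_mem_erase hn) M
  have key : ι δ • (∑ n ∈ s, c n) = c n₀ := by
    rw [Finset.smul_sum]
    rw [← Finset.add_sum_erase _ _ hn₀]
    have h1 : ι δ • c n₀ = c n₀ := by
      have : δ = 1 - γ := by rw [eq_sub_iff_add_eq, add_comm]; exact hγδ
      rw [this, map_sub, map_one, sub_smul, one_smul, hMb n₀ hn₀ γ hγ, sub_zero]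
    have h2 : ∀ n ∈ s.erase n₀, ι δ • c n = 0 := by
      intro n hn
      exact hMb n (Finset.mem_of_mem_erase hn) δ (prod_pow_le_of_mem hn M hδ)
    rw [h1, Finset.sum_congr rfl h2, Finset.sum_const_zero, add_zero]
  rw [hsum, smul_zero] at key
  exact key.symm


/-- Decompose an element of a big sup of weight spaces into finitely many
nonzero components. -/
lemma mem_biSup_wt {P : Ideal Γ → Prop} {v : V}
    (hv : v ∈ ⨆ m ∈ {m : Ideal Γ | P m}, wtSpace V ι m) :
    ∃ (s : Finset (Ideal Γ)) (c : Ideal Γ → V),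
      (∀ n ∈ s, P n) ∧ (∀ n ∈ s, c n ∈ wtSpace V ι n) ∧ (∀ n ∈ s, c n ≠ 0) ∧
      v = ∑ n ∈ s, c n := by
  classical
  rw [show (⨆ m ∈ {m : Ideal Γ | P m}, wtSpace V ι m)
      = ⨆ m : {m : Ideal Γ // P m}, wtSpace V ι (m : Ideal Γ) by
    rw [iSup_subtype]; rfl] at hv
  rw [Submodule.mem_iSup_iff_exists_finsupp] at hv
  obtain ⟨f, hf, hsum⟩ := hv
  refine ⟨(f.support.filter (fun i => f i ≠ 0)).image Subtype.val,
    fun n => if h : P n then f ⟨n, h⟩ else 0, ?_, ?_, ?_, ?_⟩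
  · intro n hn
    simp only [Finset.mem_image] at hn
    obtain ⟨i, _, rfl⟩ := hn
    exact i.2
  · intro n hn
    simp only [Finset.mem_image] at hn
    obtain ⟨i, _, rfl⟩ := hn
    simp only [dif_pos i.2]
    convert hf i
  · intro n hn
    simp only [Finset.mem_image, Finset.mem_filter] at hn
    obtain ⟨i, ⟨_, hne⟩, rfl⟩ := hn
    simp only [dif_pos i.2]
    convert hne
  · rw [← hsum, Finsupp.sum]
    rw [Finset.sum_image (by intro a _ b _ h; exact Subtype.ext h)]
    rw [Finset.sum_filter]
    refine (Finset.sum_congr rfl ?_).symm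
    intro i hi
    simp only [dif_pos i.2]
    split_ifs with h
    · rfl
    · push_neg at h; rw [h]


end Aux

section Mix
variable {k Γ U : Type*} [Field k] [CommRing Γ] [Algebra k Γ] [Ring U] [Algebra k U]
variable (ι : Γ →ₐ[k] U)

/-- `ι(I) ⬝ ΓaΓ ⬝ ι(J)` as a `k`-submodule of `U`. -/
def mixS (a : U) (I J : Ideal Γ) : Submodule k U :=
  Submodule.span k
    {x | ∃ ν ∈ I, ∃ c ∈ (gammaBimod ι a : Set U), ∃ μ ∈ J, x = ι ν * c * ι μ}

lemma self_mem_gammaBimod (a : U) : a ∈ gammaBimod ι a := by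
  apply Submodule.subset_span
  exact ⟨1, 1, by simp⟩

lemma mixS_mono {a : U} {I J I' J' : Ideal Γ} (hI : I ≤ I') (hJ : J ≤ J') :
    mixS ι a I J ≤ mixS ι a I' J' := by
  apply Submodule.span_mono
  rintro x ⟨ν, hν, c, hc, μ, hμ, rfl⟩
  exact ⟨ν, hI hν, c, hc, μ, hJ hμ, rfl⟩

/-- left-right multiplication by `ι γ₁`, `ι γ₂`, as `k`-linear map. -/
def lrMul (u₁ u₂ : U) : U →ₗ[k] U where
  toFun := fun x => u₁ * x * u₂
  map_add' := fun x y => by noncomm_ring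
  map_smul' := fun c x => by
    simp only [RingHom.id_apply, Algebra.mul_smul_comm, Algebra.smul_mul_assoc]

lemma conj_mem_mixS {a : U} {I₁ I₂ J₁ J₂ : Ideal Γ} {p : U}
    (hp : p ∈ mixS ι a I₂ J₂) {ν : Γ} (hν : ν ∈ I₁) {μ : Γ} (hμ : μ ∈ J₁) :
    ι ν * p * ι μ ∈ mixS ι a (I₁ * I₂) (J₂ * J₁) := by
  have : ι ν * p * ι μ = lrMul (k := k) (ι ν) (ι μ) p := rfl
  rw [this, ← Submodule.mem_comap]
  refine Submodule.span_le.mpr ?_ hp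
  rintro x ⟨ν₂, hν₂, c, hc, μ₂, hμ₂, rfl⟩
  rw [SetLike.mem_coe, Submodule.mem_comap]
  apply Submodule.subset_span
  refine ⟨ν * ν₂, Ideal.mul_mem_mul hν hν₂, c, hc, μ₂ * μ, Ideal.mul_mem_mul hμ₂ hμ, ?_⟩
  show ι ν * (ι ν₂ * c * ι μ₂) * ι μ = _
  rw [map_mul, map_mul]
  noncomm_ring

lemma conj_mem_gammaBimod {a : U} {c : U} (hc : c ∈ gammaBimod ι a) (ν μ : Γ) :
    ι ν * c * ι μ ∈ gammaBimod ι a := by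
  have : ι ν * c * ι μ = lrMul (k := k) (ι ν) (ι μ) c := rfl
  rw [this, ← Submodule.mem_comap]
  refine Submodule.span_le.mpr ?_ hc
  rintro x ⟨γ₁, γ₂, rfl⟩
  rw [SetLike.mem_coe, Submodule.mem_comap]
  apply Submodule.subset_span
  refine ⟨ν * γ₁, γ₂ * μ, ?_⟩
  show ι ν * (ι γ₁ * a * ι γ₂) * ι μ = _
  rw [map_mul, map_mul]
  noncomm_ring

/-- basic consequence of `¬ deltaRel`. -/
lemma base_of_not_deltaRel {m n : Ideal Γ} (hm : m.IsMaximal) (hn : n.IsMaximal)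
    (h : ¬ deltaRel ι m n) (a : U) :
    gammaBimod ι a ≤ mixS ι a n ⊤ ⊔ mixS ι a ⊤ m := by
  rw [deltaRel] at h
  push_neg at h
  have h2 := h hm hn a
  refine le_trans h2 (sup_le_sup ?_ ?_)
  · refine Submodule.span_le.mpr ?_
    rintro x ⟨μ, hμ, u, hu, rfl⟩
    apply Submodule.subset_span
    exact ⟨μ, hμ, u, hu, 1, Submodule.mem_top, by simp⟩
  · refine Submodule.span_le.mpr ?_
    rintro x ⟨u, hu, μ, hμ, rfl⟩
    apply Submodule.subset_span
    exact ⟨1, Submodule.mem_top, u, hu, μ, hμ, by simp⟩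

lemma mix_step {m n : Ideal Γ} (hm : m.IsMaximal) (hn : n.IsMaximal)
    (h : ¬ deltaRel ι m n) (a : U) (I J : Ideal Γ) :
    mixS ι a I J ≤ mixS ι a (I * n) J ⊔ mixS ι a I (m * J) := by
  refine Submodule.span_le.mpr ?_
  rintro x ⟨ν, hν, c, hc, μ, hμ, rfl⟩
  have hc2 := base_of_not_deltaRel ι hm hn h a hc
  rw [Submodule.mem_sup] at hc2
  obtain ⟨p, hp, q, hq, rfl⟩ := hc2
  have : ι ν * (p + q) * ι μ = ι ν * p * ι μ + ι ν * q * ι μ := by noncomm_ring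
  rw [this]
  apply Submodule.add_mem_sup
  · have := conj_mem_mixS ι hp hν hμ
    rwa [Ideal.top_mul] at this
  · have := conj_mem_mixS ι hq hν hμ
    rwa [Ideal.mul_top] at this

lemma bimod_le_iSup_mix {m n : Ideal Γ} (hm : m.IsMaximal) (hn : n.IsMaximal)
    (h : ¬ deltaRel ι m n) (a : U) (K : ℕ) :
    gammaBimod ι a ≤ ⨆ pq : ℕ × ℕ, ⨆ _ : pq.1 + pq.2 = K, mixS ι a (n ^ pq.1) (m ^ pq.2) := by
  induction K with
  | zero =>
    have : gammaBimod ι a ≤ mixS ι a (n ^ 0) (m ^ 0) := by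
      intro x hx
      apply Submodule.span_mono (s := {x | ∃ γ₁ γ₂ : Γ, x = ι γ₁ * a * ι γ₂}) ?_ hx
      rintro y ⟨γ₁, γ₂, rfl⟩
      refine ⟨γ₁, by simp [Ideal.one_eq_top], a, self_mem_gammaBimod ι a, γ₂, by
        simp [Ideal.one_eq_top], rfl⟩
    refine le_trans this ?_
    exact le_iSup_of_le (0, 0) (le_iSup_of_le rfl le_rfl)
  | succ K ih =>
    refine le_trans ih ?_
    refine iSup_le fun pq => iSup_le fun hpq => ?_
    refine le_trans (mix_step ι hm hn h a _ _) (sup_le ?_ ?_)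
    · have h1 : n ^ pq.1 * n = n ^ (pq.1 + 1) := by rw [pow_succ]
      rw [h1]
      exact le_iSup_of_le (pq.1 + 1, pq.2) (le_iSup_of_le (by omega) le_rfl)
    · have h1 : m * m ^ pq.2 = m ^ (pq.2 + 1) := by rw [← pow_succ']
      rw [h1]
      exact le_iSup_of_le (pq.1, pq.2 + 1) (le_iSup_of_le (by omega) le_rfl)

/-- the key consequence: `ΓaΓ ⊆ ι(n^K)·ΓaΓ + ΓaΓ·ι(m^K)`. -/
lemma bimod_le_mix_sup {m n : Ideal Γ} (hm : m.IsMaximal) (hn : n.IsMaximal)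
    (h : ¬ deltaRel ι m n) (a : U) (K : ℕ) :
    gammaBimod ι a ≤ mixS ι a (n ^ K) ⊤ ⊔ mixS ι a ⊤ (m ^ K) := by
  refine le_trans (bimod_le_iSup_mix ι hm hn h a (2 * K)) ?_
  refine iSup_le fun pq => iSup_le fun hpq => ?_
  rcases le_or_gt K pq.1 with h1 | h1
  · refine le_trans (mixS_mono ι (Ideal.pow_le_pow_right h1) le_top) le_sup_left
  · have h2 : K ≤ pq.2 := by omega
    refine le_trans (mixS_mono ι le_top (Ideal.pow_le_pow_right h2)) le_sup_right

end Mix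

section FinDim

variable {k Γ U : Type*} [Field k] [CommRing Γ] [Algebra k Γ] [Ring U] [Algebra k U]
variable (ι : Γ →ₐ[k] U)
variable {V : Type*} [AddCommGroup V] [Module k V] [Module U V] [IsScalarTower k U V]

/-- `ι γ • v` as a `k`-linear map in `γ`. -/
def iotaSmulLin (v : V) : Γ →ₗ[k] V where
  toFun := fun γ => ι γ • v
  map_add' := fun γ δ => by
    show ι (γ + δ) • v = ι γ • v + ι δ • v
    rw [map_add, add_smul]
  map_smul' := fun c γ => by
    show ι (c • γ) • v = c • (ι γ • v)
    rw [map_smul, smul_assoc]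

@[simp] lemma iotaSmulLin_apply (v : V) (γ : Γ) : iotaSmulLin ι v γ = ι γ • v := rfl

/-- The `k`-span of `ι(Γ) • F`. -/
def gSpan (F : Set V) : Submodule k V :=
  Submodule.span k {w | ∃ γ : Γ, ∃ v ∈ F, w = ι γ • v}

lemma subset_gSpan {F : Set V} {v : V} (hv : v ∈ F) (γ : Γ) : ι γ • v ∈ gSpan ι F :=
  Submodule.subset_span ⟨γ, v, hv, rfl⟩

lemma mem_gSpan_self {F : Set V} {v : V} (hv : v ∈ F) : v ∈ gSpan ι F := by
  have := subset_gSpan ι hv 1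
  rwa [map_one, one_smul] at this

lemma gSpan_iota_stable {F : Set V} {w : V} (hw : w ∈ gSpan ι F) (γ : Γ) :
    ι γ • w ∈ gSpan ι F := by
  induction hw using Submodule.span_induction with
  | mem x hx =>
    obtain ⟨γ', v, hv, rfl⟩ := hx
    rw [← iota_mul_smul]
    exact subset_gSpan ι hv _
  | zero => rw [smul_zero]; exact Submodule.zero_mem _
  | add x y _ _ hx hy => rw [smul_add]; exact Submodule.add_mem _ hx hy
  | smul c x _ hx => rw [usmul_ksmul]; exact Submodule.smul_mem _ _ hx

lemma gSpan_fg [IsNoetherianRing Γ] {m : Ideal Γ}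
    (T : Finset Γ) (hT : ∀ γ : Γ, ∃ δ ∈ Submodule.span k (T : Set Γ), γ - δ ∈ m) :
    ∀ (N : ℕ) (F : Finset V), (∀ v ∈ F, v ∈ wtBdd ι V m N) →
      (gSpan ι (F : Set V)).FG := by
  intro N
  induction N with
  | zero =>
    intro F hF
    have hbot : gSpan ι (F : Set V) ≤ ⊥ := by
      refine Submodule.span_le.mpr ?_
      rintro w ⟨γ, v, hv, rfl⟩
      have : v = 0 := by
        have := hF v hv 1 (by rw [pow_zero, Ideal.one_eq_top]; exact Submodule.mem_top)
        rwa [map_one, one_smul] at this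
      simp [this]
    rw [le_bot_iff.mp hbot]
    exact Submodule.fg_bot
  | succ N ih =>
    intro F hF
    classical
    obtain ⟨G₀, hG₀⟩ : ∃ G₀ : Finset Γ, Ideal.span (G₀ : Set Γ) = m :=
      (IsNoetherian.noetherian m)
    set F' : Finset V := (G₀ ×ˢ F).image (fun p => ι p.1 • p.2) with hF'def
    have hF' : ∀ v' ∈ F', v' ∈ wtBdd ι V m N := by
      intro v' hv'
      simp only [hF'def, Finset.mem_image, Finset.mem_product] at hv'
      obtain ⟨⟨g, v⟩, ⟨hg, hv⟩, rfl⟩ := hv'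
      intro μ hμ
      rw [← iota_mul_smul]
      refine hF v hv _ ?_
      rw [pow_succ]
      refine Ideal.mul_mem_mul hμ ?_
      rw [← hG₀]
      exact Ideal.subset_span hg
    have hIH := ih F' hF'
    set Big : Submodule k V :=
      Submodule.span k (((T ×ˢ F).image (fun p => ι p.1 • p.2) : Finset V) : Set V) ⊔
        gSpan ι (F' : Set V) with hBig
    have hle : gSpan ι (F : Set V) ≤ Big := by
      refine Submodule.span_le.mpr ?_
      rintro w ⟨γ, v, hv, rfl⟩
      obtain ⟨δ, hδ, hγδ⟩ := hT γ
      have hsplit : ι γ • v = ι δ • v + ι (γ - δ) • v := by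
        rw [← add_smul, ← map_add]
        congr 1
        ring_nf
      rw [hsplit]
      refine Submodule.add_mem _ ?_ ?_
      · refine le_sup_left (α := Submodule k V) (a := _) ?_
        have : ι δ • v = iotaSmulLin ι v δ := rfl
        rw [this]
        have h2 : iotaSmulLin ι v δ ∈ Submodule.map (iotaSmulLin ι v) (Submodule.span k (T : Set Γ)) :=
          Submodule.mem_map_of_mem hδ
        rw [Submodule.map_span] at h2
        refine Submodule.span_le.mpr ?_ h2
        rintro x ⟨t, ht, rfl⟩
        refine Submodule.subset_span ?_
        simp only [Finset.coe_image, Set.mem_image, Finset.mem_coe, Finset.mem_product]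
        exact ⟨(t, v), ⟨ht, hv⟩, rfl⟩
      · refine le_sup_right (α := Submodule k V) (a := _) ?_
        -- the set of μ with ι μ • v ∈ gSpan F' is an ideal containing G₀, hence ⊇ m
        set A : Ideal Γ :=
          { carrier := {μ | ι μ • v ∈ gSpan ι (F' : Set V)}
            add_mem' := by
              intro a b ha hb
              simp only [Set.mem_setOf_eq] at ha hb ⊢
              rw [map_add, add_smul]
              exact Submodule.add_mem _ ha hb
            zero_mem' := by
              simp only [Set.mem_setOf_eq]
              rw [map_zero, zero_smul]
              exact Submodule.zero_mem _
            smul_mem' := by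
              intro c a ha
              simp only [Set.mem_setOf_eq, smul_eq_mul] at ha ⊢
              rw [iota_mul_smul]
              exact gSpan_iota_stable ι ha c } with hAdef
        have hGA : m ≤ A := by
          rw [← hG₀]
          refine Ideal.span_le.mpr ?_
          intro g hg
          show ι g • v ∈ gSpan ι (F' : Set V)
          refine mem_gSpan_self ι ?_
          simp only [hF'def, Finset.coe_image, Set.mem_image, Finset.mem_coe,
            Finset.mem_product]
          exact ⟨(g, v), ⟨hg, hv⟩, rfl⟩
        exact hGA hγδ
    have hBigFG : Big.FG := Submodule.FG.sup ⟨_, rfl⟩ hIH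
    have hBigFD : FiniteDimensional k Big := Module.Finite.iff_fg.mpr hBigFG
    have : FiniteDimensional k (gSpan ι (F : Set V)) :=
      Submodule.finiteDimensional_of_le hle
    exact Module.Finite.iff_fg.mp this

end FinDim

section Residue

variable {k Γ U : Type*} [Field k] [CommRing Γ] [Algebra k Γ] [Ring U] [Algebra k U]

lemma exists_residue_finset [Algebra.FiniteType k Γ] {m : Ideal Γ} (hm : m.IsMaximal) :
    ∃ T : Finset Γ, ∀ γ : Γ, ∃ δ ∈ Submodule.span k (T : Set Γ), γ - δ ∈ m := by
  classical
  haveI := hm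
  haveI hft : Algebra.FiniteType k (Γ ⧸ m) :=
    Algebra.FiniteType.of_surjective (Ideal.Quotient.mkₐ k m)
      (Ideal.Quotient.mkₐ_surjective k m)
  haveI hjac : IsJacobsonRing k := inferInstance
  haveI : Module.Finite k (Γ ⧸ m) :=
    @finite_of_finite_type_of_isJacobsonRing k (Γ ⧸ m) _ (Ideal.Quotient.field m)
      (Ideal.Quotient.algebra k) hjac hft
  obtain ⟨S, hS⟩ : (⊤ : Submodule k (Γ ⧸ m)).FG := Module.finite_def.mp inferInstance
  have hsurj : Function.Surjective (Ideal.Quotient.mk m) := Ideal.Quotient.mk_surjective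
  refine ⟨S.image (Function.surjInv hsurj), ?_⟩
  intro γ
  set T := S.image (Function.surjInv hsurj) with hT
  have hγmem : Ideal.Quotient.mk m γ ∈ Submodule.span k (S : Set (Γ ⧸ m)) := by
    rw [hS]; exact Submodule.mem_top
  have hsub : (S : Set (Γ ⧸ m)) ⊆ (Ideal.Quotient.mkₐ k m).toLinearMap '' (T : Set Γ) := by
    intro y hy
    refine ⟨Function.surjInv hsurj y, ?_, Function.surjInv_eq hsurj y⟩
    simp only [hT, Finset.coe_image, Set.mem_image, Finset.mem_coe]
    exact ⟨y, hy, rfl⟩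
  have h2 : Ideal.Quotient.mk m γ ∈
      Submodule.map (Ideal.Quotient.mkₐ k m).toLinearMap (Submodule.span k (T : Set Γ)) := by
    rw [Submodule.map_span]
    exact Submodule.span_le.mpr (le_trans hsub Submodule.subset_span) hγmem
  obtain ⟨δ, hδ, hδeq⟩ := h2
  refine ⟨δ, hδ, ?_⟩
  rw [← Ideal.Quotient.eq]
  exact hδeq.symm

lemma deltaRel_self (ι : Γ →ₐ[k] U) (hinj : Function.Injective ι)
    {m : Ideal Γ} (hm : m.IsMaximal) : deltaRel ι m m := by
  refine ⟨hm, hm, 1, ?_⟩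
  intro hle
  set S : Submodule k U := Submodule.span k (ι '' (m : Set Γ)) with hSdef
  have hmulS : ∀ {u : U}, u ∈ Submodule.span k (Set.range (ι : Γ → U)) →
      ∀ μ ∈ m, ι μ * u ∈ S ∧ u * ι μ ∈ S := by
    intro u hu μ hμ
    induction hu using Submodule.span_induction with
    | mem x hx =>
      obtain ⟨γ, rfl⟩ := hx
      constructor
      · rw [← map_mul]
        exact Submodule.subset_span ⟨μ * γ, Ideal.mul_mem_right γ m hμ, rfl⟩
      · rw [← map_mul]
        exact Submodule.subset_span ⟨γ * μ, Ideal.mul_mem_left m γ hμ, rfl⟩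
    | zero => constructor <;> simp [Submodule.zero_mem]
    | add x y _ _ hx hy =>
      constructor
      · rw [mul_add]; exact Submodule.add_mem _ (hx.1) (hy.1)
      · rw [add_mul]; exact Submodule.add_mem _ (hx.2) (hy.2)
    | smul c x _ hx =>
      constructor
      · rw [Algebra.mul_smul_comm]; exact Submodule.smul_mem _ _ (hx.1)
      · rw [Algebra.smul_mul_assoc]; exact Submodule.smul_mem _ _ (hx.2)
  have hrange : gammaBimod ι 1 ≤ Submodule.span k (Set.range (ι : Γ → U)) := by
    refine Submodule.span_le.mpr ?_
    rintro x ⟨γ₁, γ₂, rfl⟩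
    refine Submodule.subset_span ⟨γ₁ * γ₂, ?_⟩
    rw [map_mul, mul_one (ι γ₁)]
  have h1 : (1 : U) ∈ S := by
    have h1B : (1 : U) ∈ gammaBimod ι 1 := self_mem_gammaBimod ι 1
    have := hle h1B
    rw [Submodule.mem_sup] at this
    obtain ⟨p, hp, q, hq, hpq⟩ := this
    have hpS : p ∈ S := by
      refine Submodule.span_le.mpr ?_ hp
      rintro x ⟨μ, hμ, u, hu, rfl⟩
      exact (hmulS (hrange hu) μ hμ).1
    have hqS : q ∈ S := by
      refine Submodule.span_le.mpr ?_ hq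
      rintro x ⟨u, hu, μ, hμ, rfl⟩
      exact (hmulS (hrange hu) μ hμ).2
    rw [← hpq]
    exact Submodule.add_mem _ hpS hqS
  -- now derive a contradiction
  have hSmap : S ≤ Submodule.map ι.toLinearMap (Submodule.restrictScalars k m) := by
    refine Submodule.span_le.mpr ?_
    rintro x ⟨μ, hμ, rfl⟩
    exact ⟨μ, hμ, rfl⟩
  obtain ⟨μ, hμ, hμ1⟩ := hSmap h1
  have : μ = 1 := hinj (by rwa [map_one])
  rw [this] at hμ
  exact hm.ne_top (Ideal.eq_top_iff_one m |>.mpr hμ)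

end Residue

section Lift

variable {k Γ U : Type*} [Field k] [CommRing Γ] [Algebra k Γ] [Ring U] [Algebra k U]
variable (ι : Γ →ₐ[k] U)
variable {V : Type*} [AddCommGroup V] [Module k V] [Module U V] [IsScalarTower k U V]

lemma biSup_induction {η : Type*} (S : Set η) (q : η → Submodule k V) {C : V → Prop} {x : V}
    (hx : x ∈ ⨆ n ∈ S, q n) (mem : ∀ n ∈ S, ∀ v ∈ q n, C v) (zero : C 0)
    (add : ∀ a b, C a → C b → C (a + b)) : C x := by
  refine Submodule.iSup_induction (fun n => ⨆ _ : n ∈ S, q n) (motive := C) hx ?_ zero add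
  intro n v hv
  by_cases h : n ∈ S
  · rw [iSup_pos h] at hv
    exact mem n h v hv
  · rw [iSup_neg h] at hv
    rw [(Submodule.mem_bot k).mp hv]
    exact zero

lemma iota_smul_mem_biSup_wtSpace {P : Ideal Γ → Prop} {w : V}
    (hw : w ∈ ⨆ n ∈ {n : Ideal Γ | P n}, wtSpace V ι n) (γ : Γ) :
    ι γ • w ∈ ⨆ n ∈ {n : Ideal Γ | P n}, wtSpace V ι n := by
  refine biSup_induction (C := fun v => ι γ • v ∈ ⨆ n ∈ {n : Ideal Γ | P n}, wtSpace V ι n)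
    _ _ hw ?_ ?_ ?_
  · intro n hn v hv
    exact Submodule.mem_iSup_of_mem n (Submodule.mem_iSup_of_mem hn
      (iota_smul_mem_wtSpace ι γ hv))
  · show ι γ • (0 : V) ∈ _
    rw [smul_zero]; exact Submodule.zero_mem _
  · intro a b ha hb
    show ι γ • (a + b) ∈ _
    rw [smul_add]; exact Submodule.add_mem _ ha hb

lemma iota_smul_mem_biSup_wtBdd {S : Set (Ideal Γ)} {M : ℕ} {w : V}
    (hw : w ∈ ⨆ n ∈ S, wtBdd ι V n M) (γ : Γ) :
    ι γ • w ∈ ⨆ n ∈ S, wtBdd ι V n M := by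
  refine biSup_induction (C := fun v => ι γ • v ∈ ⨆ n ∈ S, wtBdd ι V n M) _ _ hw ?_ ?_ ?_
  · intro n hn v hv
    exact Submodule.mem_iSup_of_mem n (Submodule.mem_iSup_of_mem hn
      (iota_smul_mem_wtBdd ι γ hv))
  · show ι γ • (0 : V) ∈ _
    rw [smul_zero]; exact Submodule.zero_mem _
  · intro a b ha hb
    show ι γ • (a + b) ∈ _
    rw [smul_add]; exact Submodule.add_mem _ ha hb

lemma kill_biSup_wtBdd {s : Finset (Ideal Γ)} {M : ℕ} {w : V}
    (hw : w ∈ ⨆ n ∈ (↑s : Set (Ideal Γ)), wtBdd ι V n M) {δ : Γ}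
    (hδ : δ ∈ ∏ n ∈ s, n ^ M) : ι δ • w = 0 := by
  refine biSup_induction (C := fun w => ι δ • w = 0) _ _ hw ?_ ?_ ?_
  · intro n hn v hv
    exact hv δ (prod_pow_le_of_mem (Finset.mem_coe.mp hn) M hδ)
  · show ι δ • (0 : V) = 0
    rw [smul_zero]
  · intro a b ha hb
    show ι δ • (a + b) = 0
    rw [smul_add, ha, hb, add_zero]

/-- extract the dominant component kill: if `w` lies in the bounded sup, `ν` kills the
`n₀`-component and `δ` kills all other components. -/
lemma kill_biSup_wtBdd_erase [DecidableEq (Ideal Γ)] {s : Finset (Ideal Γ)} {M : ℕ} {n₀ : Ideal Γ} {w : V}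
    (hw : w ∈ ⨆ n ∈ (↑s : Set (Ideal Γ)), wtBdd ι V n M) {ν δ : Γ}
    (hν : ν ∈ n₀ ^ M) (hδ : δ ∈ ∏ n ∈ s.erase n₀, n ^ M) :
    ι δ • ι ν • w = 0 := by
  refine biSup_induction (C := fun w => ι δ • ι ν • w = 0) _ _ hw ?_ ?_ ?_
  · intro n hn v hv
    by_cases h : n = n₀
    · subst h
      rw [hv ν hν, smul_zero]
    · rw [iota_smul_comm, hv δ (prod_pow_le_of_mem (Finset.mem_erase.mpr
        ⟨h, Finset.mem_coe.mp hn⟩) M hδ), smul_zero]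
  · show ι δ • ι ν • (0 : V) = 0
    rw [smul_zero, smul_zero]
  · intro a b ha hb
    show ι δ • ι ν • (a + b) = 0
    rw [smul_add, smul_add, ha, hb, add_zero]

lemma exists_uniform_bound {P : Ideal Γ → Prop} (L : Finset V)
    (hL : ∀ z ∈ L, z ∈ ⨆ n ∈ {n : Ideal Γ | P n}, wtSpace V ι n) :
    ∃ (s : Finset (Ideal Γ)) (M : ℕ), (∀ n ∈ s, P n) ∧
      ∀ z ∈ L, z ∈ ⨆ n ∈ (↑s : Set (Ideal Γ)), wtBdd ι V n M := by
  classical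
  induction L using Finset.induction with
  | empty => exact ⟨∅, 0, by simp, by simp⟩
  | @insert z L hz ih =>
    obtain ⟨s₁, M₁, hs₁, hb₁⟩ := ih (fun w hw => hL w (Finset.mem_insert_of_mem hw))
    have hzmem := hL z (Finset.mem_insert_self z L)
    obtain ⟨s₂, c, hs₂P, hcmem, hcne, hzsum⟩ := mem_biSup_wt ι hzmem
    have hex : ∀ n ∈ s₂, ∃ M, c n ∈ wtBdd ι V n M := fun n hn => hcmem n hn
    choose! Mf hMf using hex
    set M₂ := s₂.sup Mf with hM₂
    refine ⟨s₁ ∪ s₂, max M₁ M₂, ?_, ?_⟩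
    · intro n hn
      rcases Finset.mem_union.mp hn with h | h
      · exact hs₁ n h
      · exact hs₂P n h
    · intro w hw
      have hmono : ∀ (t : Finset (Ideal Γ)) (M : ℕ), t ⊆ s₁ ∪ s₂ → M ≤ max M₁ M₂ →
          (⨆ n ∈ (↑t : Set (Ideal Γ)), wtBdd ι V n M) ≤
            ⨆ n ∈ (↑(s₁ ∪ s₂) : Set (Ideal Γ)), wtBdd ι V n (max M₁ M₂) := by
        intro t M ht hM
        refine iSup_le fun n => iSup_le fun hn => ?_
        exact le_trans (wtBdd_mono ι hM) (le_iSup_of_le n (le_iSup_of_le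
          (Finset.mem_coe.mpr (ht (Finset.mem_coe.mp hn))) le_rfl))
      rcases Finset.mem_insert.mp hw with rfl | hw'
      · refine hmono s₂ M₂ Finset.subset_union_right (le_max_right _ _) ?_
        rw [hzsum]
        refine Submodule.sum_mem _ ?_
        intro n hn
        refine Submodule.mem_iSup_of_mem n (Submodule.mem_iSup_of_mem
          (Finset.mem_coe.mpr hn) ?_)
        exact wtBdd_mono ι (Finset.le_sup hn) (hMf n hn)
      · exact hmono s₁ M₁ Finset.subset_union_left (le_max_left _ _) (hb₁ w hw')

end Lift

section Sect

variable {k Γ U : Type*} [Field k] [CommRing Γ] [Algebra k Γ] [Ring U] [Algebra k U]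
variable (ι : Γ →ₐ[k] U)
variable {X : Type*} [AddCommGroup X] [Module k X] [Module U X] [IsScalarTower k U X]
variable {X' : Type*} [AddCommGroup X'] [Module k X'] [Module U X'] [IsScalarTower k U X']
variable {Y : Type*} [AddCommGroup Y] [Module k Y] [Module U Y] [IsScalarTower k U Y]

lemma ker_le_biSup (f : X' →ₗ[U] Y) (g : Y →ₗ[U] X)
    (hrange : LinearMap.range f = LinearMap.ker g)
    (htopX' : (⨆ n ∈ {n : Ideal Γ | n.IsMaximal}, wtSpace X' ι n) = ⊤) :
    ∀ z : Y, g z = 0 →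
      z ∈ ⨆ n ∈ {n : Ideal Γ | n.IsMaximal ∧ wtSpace X' ι n ≠ ⊥}, wtSpace Y ι n := by
  intro z hz
  have hzr : z ∈ LinearMap.range f := by
    rw [hrange]; exact LinearMap.mem_ker.mpr hz
  obtain ⟨x', rfl⟩ := hzr
  have hx' : x' ∈ ⨆ n ∈ {n : Ideal Γ | n.IsMaximal}, wtSpace X' ι n := by
    rw [htopX']; exact Submodule.mem_top
  obtain ⟨s, c, hsP, hcm, hcne, rfl⟩ := mem_biSup_wt ι hx'
  rw [map_sum]
  refine Submodule.sum_mem _ fun n hn => ?_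
  refine Submodule.mem_iSup_of_mem n (Submodule.mem_iSup_of_mem ?_
    (map_mem_wtSpace ι f (hcm n hn)))
  refine ⟨hsP n hn, fun hbot => hcne n hn ?_⟩
  have := hcm n hn
  rw [hbot] at this
  exact (Submodule.mem_bot k).mp this

lemma lift_wt [IsNoetherianRing Γ] (f : X' →ₗ[U] Y) (g : Y →ₗ[U] X)
    (hgsurj : Function.Surjective g) (hrange : LinearMap.range f = LinearMap.ker g)
    (htopX' : (⨆ n ∈ {n : Ideal Γ | n.IsMaximal}, wtSpace X' ι n) = ⊤)
    (hsupp : ∀ n : Ideal Γ, n.IsMaximal → wtSpace X ι n ≠ ⊥ → wtSpace X' ι n = ⊥)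
    {m : Ideal Γ} (hm : m.IsMaximal) (hmne : wtSpace X ι m ≠ ⊥)
    {N : ℕ} {x : X} (hx : x ∈ wtBdd ι X m N) :
    ∃ y : Y, y ∈ wtBdd ι Y m N ∧ g y = x := by
  classical
  obtain ⟨y₀, hy₀⟩ := hgsurj x
  obtain ⟨G, hG⟩ : (m ^ N).FG := IsNoetherian.noetherian _
  set L : Finset Y := G.image (fun μ => ι μ • y₀) with hL
  have hLmem : ∀ z ∈ L,
      z ∈ ⨆ n ∈ {n : Ideal Γ | n.IsMaximal ∧ wtSpace X' ι n ≠ ⊥}, wtSpace Y ι n := by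
    intro z hz
    simp only [hL, Finset.mem_image] at hz
    obtain ⟨μ, hμ, rfl⟩ := hz
    refine ker_le_biSup ι f g hrange htopX' _ ?_
    rw [LinearMap.map_smul, hy₀]
    exact hx μ (by rw [← hG]; exact Ideal.subset_span hμ)
  obtain ⟨s, M, hsP, hsb⟩ := exists_uniform_bound ι L hLmem
  have hms : ∀ n ∈ s, n ≠ m := by
    intro n hn heq
    subst heq
    exact (hsP n hn).2 (hsupp n (hsP n hn).1 hmne)
  obtain ⟨γ, δ, hγ, hδ, hγδ⟩ := exists_crt hm N s (fun n hn => (hsP n hn).1) hms M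
  refine ⟨ι δ • y₀, ?_, ?_⟩
  · have hann : m ^ N ≤ annGamma ι (ι δ • y₀) := by
      rw [← hG]
      refine Ideal.span_le.mpr ?_
      intro μ hμ
      show ι μ • ι δ • y₀ = 0
      rw [iota_smul_comm]
      exact kill_biSup_wtBdd ι (hsb _ (Finset.mem_image_of_mem _ hμ)) hδ
    intro μ' hμ'
    exact hann hμ'
  · rw [LinearMap.map_smul, hy₀]
    have hδeq : δ = 1 - γ := by rw [eq_sub_iff_add_eq, add_comm]; exact hγδ
    rw [hδeq, map_sub, map_one, sub_smul, one_smul, hx γ hγ, sub_zero]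

end Sect

section Sect2

variable {k Γ U : Type*} [Field k] [CommRing Γ] [Algebra k Γ] [Ring U] [Algebra k U]
variable (ι : Γ →ₐ[k] U)
variable {X : Type*} [AddCommGroup X] [Module k X] [Module U X] [IsScalarTower k U X]
variable {X' : Type*} [AddCommGroup X'] [Module k X'] [Module U X'] [IsScalarTower k U X']
variable {Y : Type*} [AddCommGroup Y] [Module k Y] [Module U Y] [IsScalarTower k U Y]

lemma exists_section [IsNoetherianRing Γ] (f : X' →ₗ[U] Y) (g : Y →ₗ[U] X)
    (hgsurj : Function.Surjective g) (hrange : LinearMap.range f = LinearMap.ker g)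
    (htopX : (⨆ n ∈ {n : Ideal Γ | n.IsMaximal}, wtSpace X ι n) = ⊤)
    (htopX' : (⨆ n ∈ {n : Ideal Γ | n.IsMaximal}, wtSpace X' ι n) = ⊤)
    (hsupp : ∀ n : Ideal Γ, n.IsMaximal → wtSpace X ι n ≠ ⊥ → wtSpace X' ι n = ⊥) :
    ∃ s₀ : X →ₗ[k] Y,
      (∀ x, g (s₀ x) = x) ∧
      (∀ (m : Ideal Γ) (N : ℕ) (x : X), m.IsMaximal → wtSpace X ι m ≠ ⊥ →
        x ∈ wtBdd ι X m N → s₀ x ∈ wtBdd ι Y m N) ∧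
      (∀ (γ : Γ) (x : X), s₀ (ι γ • x) = ι γ • s₀ x) := by
  classical
  have hTinj : ∀ w ∈ (⨆ n ∈ {n : Ideal Γ | n.IsMaximal ∧ wtSpace X ι n ≠ ⊥},
      wtSpace Y ι n), g w = 0 → w = 0 := by
    intro w hw hgw
    obtain ⟨s₁, c₁, hs₁P, hc₁m, hc₁ne, hw₁⟩ := mem_biSup_wt ι hw
    have hw₂ := ker_le_biSup ι f g hrange htopX' w hgw
    obtain ⟨s₂, c₂, hs₂P, hc₂m, hc₂ne, hw₂'⟩ := mem_biSup_wt ι hw₂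
    have hdisj12 : ∀ n ∈ s₁, n ∉ s₂ := by
      intro n hn hn2
      exact (hs₂P n hn2).2 (hsupp n (hs₁P n hn).1 (hs₁P n hn).2)
    have hcsum : ∑ n ∈ s₁ ∪ s₂,
        ((if n ∈ s₁ then c₁ n else 0) - (if n ∈ s₂ then c₂ n else 0)) = 0 := by
      rw [Finset.sum_sub_distrib, Finset.sum_ite_mem, Finset.sum_ite_mem,
        Finset.union_inter_cancel_left, Finset.union_inter_cancel_right,
        ← hw₁, ← hw₂', sub_self]
    have hall := wt_indep ι (s₁ ∪ s₂)
      (fun n hn => by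
        rcases Finset.mem_union.mp hn with h | h
        · exact (hs₁P n h).1
        · exact (hs₂P n h).1)
      _
      (fun n hn => by
        refine Submodule.sub_mem _ ?_ ?_
        · split_ifs with h
          · exact hc₁m n h
          · exact Submodule.zero_mem _
        · split_ifs with h
          · exact hc₂m n h
          · exact Submodule.zero_mem _)
      hcsum
    have hzero : ∀ n ∈ s₁, c₁ n = 0 := by
      intro n hn
      have := hall n (Finset.mem_union_left _ hn)
      rwa [if_pos hn, if_neg (hdisj12 n hn), sub_zero] at this
    rw [hw₁]
    exact Finset.sum_eq_zero hzero
  set T : Submodule k Y :=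
    ⨆ n ∈ {n : Ideal Γ | n.IsMaximal ∧ wtSpace X ι n ≠ ⊥}, wtSpace Y ι n with hT
  set gT : T →ₗ[k] X := (g.restrictScalars k).comp T.subtype with hgT
  have hgTapp : ∀ t : T, gT t = g (t : Y) := fun t => rfl
  have hginj : Function.Injective gT := by
    intro t₁ t₂ ht
    have h0 : g ((t₁ : Y) - (t₂ : Y)) = 0 := by
      rw [map_sub]
      rw [hgTapp, hgTapp] at ht
      rw [ht, sub_self]
    have := hTinj ((t₁ : Y) - (t₂ : Y)) (Submodule.sub_mem _ t₁.2 t₂.2) h0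
    exact Subtype.ext (sub_eq_zero.mp this)
  have hgsurjT : Function.Surjective gT := by
    intro x
    have hx : x ∈ ⨆ n ∈ {n : Ideal Γ | n.IsMaximal}, wtSpace X ι n := by
      rw [htopX]; exact Submodule.mem_top
    obtain ⟨s, c, hsP, hcm, hcne, rfl⟩ := mem_biSup_wt ι hx
    have hlift : ∀ n ∈ s, ∃ y : Y, y ∈ wtSpace Y ι n ∧ g y = c n := by
      intro n hn
      have hne : wtSpace X ι n ≠ ⊥ := by
        intro hbot
        refine hcne n hn ?_
        have := hcm n hn
        rw [hbot] at this
        exact (Submodule.mem_bot k).mp this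
      obtain ⟨N, hN⟩ := hcm n hn
      obtain ⟨y, hy1, hy2⟩ := lift_wt ι f g hgsurj hrange htopX' hsupp (hsP n hn) hne hN
      exact ⟨y, wtBdd_le_wtSpace ι hy1, hy2⟩
    choose! yc hyc1 hyc2 using hlift
    have hsum_mem : (∑ n ∈ s, yc n) ∈ T := by
      refine Submodule.sum_mem _ fun n hn => ?_
      have hne : wtSpace X ι n ≠ ⊥ := by
        intro hbot
        refine hcne n hn ?_
        have := hcm n hn
        rw [hbot] at this
        exact (Submodule.mem_bot k).mp this
      exact Submodule.mem_iSup_of_mem n (Submodule.mem_iSup_of_mem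
        ⟨hsP n hn, hne⟩ (hyc1 n hn))
    refine ⟨⟨∑ n ∈ s, yc n, hsum_mem⟩, ?_⟩
    rw [hgTapp]
    show g (∑ n ∈ s, yc n) = _
    rw [map_sum]
    exact Finset.sum_congr rfl (fun n hn => hyc2 n hn)
  set e := LinearEquiv.ofBijective gT ⟨hginj, hgsurjT⟩ with he
  set s₀ : X →ₗ[k] Y := T.subtype.comp (e.symm : X →ₗ[k] T) with hs₀
  have hs₀app : ∀ x, s₀ x = ((e.symm x : T) : Y) := fun x => rfl
  have hP1 : ∀ x, g (s₀ x) = x := by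
    intro x
    have h1 : gT (e.symm x) = x := by
      have h2 := e.apply_symm_apply x
      rw [he] at h2
      exact h2
    rw [hs₀app]
    exact h1
  have hUniq : ∀ (w : Y) (hw : w ∈ T) (x : X), g w = x → s₀ x = w := by
    intro w hw x hgw
    have h1 : e ⟨w, hw⟩ = x := hgw
    have h2 : e.symm x = ⟨w, hw⟩ := by rw [← h1, LinearEquiv.symm_apply_apply]
    rw [hs₀app, h2]
  have hP2 : ∀ (m : Ideal Γ) (N : ℕ) (x : X), m.IsMaximal → wtSpace X ι m ≠ ⊥ →
      x ∈ wtBdd ι X m N → s₀ x ∈ wtBdd ι Y m N := by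
    intro m N x hm hne hx
    obtain ⟨y, hy1, hy2⟩ := lift_wt ι f g hgsurj hrange htopX' hsupp hm hne hx
    have hyT : y ∈ T := Submodule.mem_iSup_of_mem m (Submodule.mem_iSup_of_mem
      ⟨hm, hne⟩ (wtBdd_le_wtSpace ι hy1))
    rw [hUniq y hyT x hy2]
    exact hy1
  have hP3 : ∀ (γ : Γ) (x : X), s₀ (ι γ • x) = ι γ • s₀ x := by
    intro γ x
    have hsT : s₀ x ∈ T := by rw [hs₀app]; exact (e.symm x).2
    have hT2 : ι γ • s₀ x ∈ T := by
      rw [hT]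
      refine iota_smul_mem_biSup_wtSpace ι ?_ γ
      rw [← hT]
      exact hsT
    refine hUniq _ hT2 _ ?_
    rw [LinearMap.map_smul, hP1]
  exact ⟨s₀, hP1, hP2, hP3⟩

end Sect2

section ULin

variable {k Γ U : Type*} [Field k] [CommRing Γ] [Algebra k Γ] [Ring U] [Algebra k U]
variable (ι : Γ →ₐ[k] U)
variable {X : Type*} [AddCommGroup X] [Module k X] [Module U X] [IsScalarTower k U X]
variable {X' : Type*} [AddCommGroup X'] [Module k X'] [Module U X'] [IsScalarTower k U X']
variable {Y : Type*} [AddCommGroup Y] [Module k Y] [Module U Y] [IsScalarTower k U Y]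

/-- action on a fixed vector as a `k`-linear map `U → Y`. -/
def actOn (y : Y) : U →ₗ[k] Y where
  toFun := fun w => w • y
  map_add' := fun w w' => add_smul w w' y
  map_smul' := fun c w => by
    show (c • w) • y = c • (w • y)
    rw [smul_assoc]

@[simp] lemma actOn_apply (y : Y) (w : U) : actOn (k := k) y w = w • y := rfl

lemma section_ulinear [IsNoetherianRing Γ] [Algebra.FiniteType k Γ]
    (f : X' →ₗ[U] Y) (g : Y →ₗ[U] X)
    (hrange : LinearMap.range f = LinearMap.ker g)
    (htopX' : (⨆ n ∈ {n : Ideal Γ | n.IsMaximal}, wtSpace X' ι n) = ⊤)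
    (hnd : ∀ m n : Ideal Γ, m.IsMaximal → n.IsMaximal → wtSpace X ι m ≠ ⊥ →
      wtSpace X' ι n ≠ ⊥ → ¬ deltaRel ι m n)
    (s₀ : X →ₗ[k] Y)
    (hP1 : ∀ x, g (s₀ x) = x)
    (hP2 : ∀ (m : Ideal Γ) (N : ℕ) (x : X), m.IsMaximal → wtSpace X ι m ≠ ⊥ →
      x ∈ wtBdd ι X m N → s₀ x ∈ wtBdd ι Y m N)
    (hP3 : ∀ (γ : Γ) (x : X), s₀ (ι γ • x) = ι γ • s₀ x)
    (u : U) {m : Ideal Γ} (hm : m.IsMaximal) (hmne : wtSpace X ι m ≠ ⊥)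
    {N : ℕ} {x : X} (hx : x ∈ wtBdd ι X m N) :
    u • s₀ x = s₀ (u • x) := by
  classical
  set y : Y := s₀ x with hydef
  have hy : y ∈ wtBdd ι Y m N := hP2 m N x hm hmne hx
  set π : Y →ₗ[k] Y := LinearMap.id - s₀.comp (g.restrictScalars k) with hπ
  have hπapp : ∀ w : Y, π w = w - s₀ (g w) := by
    intro w
    simp only [hπ, LinearMap.sub_apply, LinearMap.id_apply, LinearMap.comp_apply,
      LinearMap.coe_restrictScalars]
  have hπker : ∀ w : Y, g (π w) = 0 := by
    intro w
    rw [hπapp, map_sub, hP1, sub_self]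
  have hπΓ : ∀ (γ : Γ) (w : Y), π (ι γ • w) = ι γ • π w := by
    intro γ w
    rw [hπapp, hπapp, LinearMap.map_smul, hP3, smul_sub]
  -- the element we must kill
  set d : Y := π (u • y) with hd
  have hgoal : u • s₀ x - s₀ (u • x) = d := by
    rw [hd, hπapp, ← hydef]
    congr 1
    rw [LinearMap.map_smul, hP1]
  rw [← sub_eq_zero, hgoal]
  -- finite dimensionality of the Γ-span of y
  obtain ⟨T, hT⟩ := exists_residue_finset (k := k) hm
  have hEfg : (gSpan ι (({y} : Finset Y) : Set Y)).FG := by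
    refine gSpan_fg ι T hT N ({y} : Finset Y) ?_
    intro v hv
    rw [Finset.mem_singleton] at hv
    rw [hv]
    exact hy
  set E := gSpan ι (({y} : Finset Y) : Set Y) with hE
  have hyE : ∀ γ : Γ, ι γ • y ∈ E := by
    intro γ
    exact subset_gSpan ι (by simp) γ
  set L : Y →ₗ[k] Y := π.comp (uSmulL u) with hLdef
  have hLapp : ∀ w : Y, L w = π (u • w) := fun w => rfl
  set P₀ : Submodule k Y := Submodule.map L E with hP₀
  have hP₀fg : P₀.FG := Submodule.FG.map L hEfg
  obtain ⟨F, hF⟩ : ∃ F : Finset Y, Submodule.span k (↑F : Set Y) = P₀ := hP₀fg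
  have hFker : ∀ v ∈ F, v ∈ ⨆ n ∈ {n : Ideal Γ | n.IsMaximal ∧ wtSpace X' ι n ≠ ⊥},
      wtSpace Y ι n := by
    intro v hv
    have hvP₀ : v ∈ P₀ := by
      rw [← hF]
      exact Submodule.subset_span hv
    obtain ⟨e, _, rfl⟩ := hvP₀
    exact ker_le_biSup ι f g hrange htopX' _ (by rw [hLapp]; exact hπker _)
  obtain ⟨s, M₁, hsP, hsb₁⟩ := exists_uniform_bound ι F hFker
  set M := M₁ + 1 with hMdef
  have hsb : ∀ v ∈ F, v ∈ ⨆ n ∈ (↑s : Set (Ideal Γ)), wtBdd ι Y n M := by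
    intro v hv
    exact iSup_mono (fun n => iSup_mono (fun hn => wtBdd_mono ι (Nat.le_succ M₁)))
      (hsb₁ v hv)
  set Z₀ : Submodule k Y := ⨆ n ∈ (↑s : Set (Ideal Γ)), wtBdd ι Y n M with hZ₀
  have hP₀Z : P₀ ≤ Z₀ := by
    rw [← hF]
    exact Submodule.span_le.mpr (fun v hv => hsb v hv)
  -- the Γ-stable envelope
  set P : Submodule k Y :=
    Submodule.span k {w | ∃ γ₁ γ₂ : Γ, w = ι γ₁ • π (u • ι γ₂ • y)} with hPdef
  have hPZ : P ≤ Z₀ := by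
    refine Submodule.span_le.mpr ?_
    rintro w ⟨γ₁, γ₂, rfl⟩
    have h1 : π (u • ι γ₂ • y) ∈ P₀ := by
      rw [← hLapp]
      exact Submodule.mem_map_of_mem (hyE γ₂)
    exact iota_smul_mem_biSup_wtBdd ι (hP₀Z h1) γ₁
  have hdP : d ∈ P := by
    refine Submodule.subset_span ⟨1, 1, ?_⟩
    rw [hd, map_one, one_smul, one_smul]
  -- π (c • (ι γ • y)) ∈ P for c in the bimodule
  have hbimodP : ∀ c ∈ gammaBimod ι u, ∀ γ : Γ, π (c • (ι γ • y)) ∈ P := by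
    intro c hc
    induction hc using Submodule.span_induction with
    | mem w hw =>
      obtain ⟨γ₁, γ₂, rfl⟩ := hw
      intro γ
      have h1 : (ι γ₁ * u * ι γ₂) • (ι γ • y) = ι γ₁ • (u • (ι (γ₂ * γ) • y)) := by
        rw [mul_smul, mul_smul, iota_mul_smul]
      rw [h1, hπΓ]
      exact Submodule.subset_span ⟨γ₁, γ₂ * γ, rfl⟩
    | zero =>
      intro γ
      rw [zero_smul, map_zero]
      exact Submodule.zero_mem _
    | add c₁ c₂ _ _ h₁ h₂ =>
      intro γ
      rw [add_smul, map_add]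
      exact Submodule.add_mem _ (h₁ γ) (h₂ γ)
    | smul a c₁ _ h₁ =>
      intro γ
      rw [smul_assoc, map_smul]
      exact Submodule.smul_mem _ _ (h₁ γ)
  -- for each n₀ ∈ s, the erased product kills d
  have hδA : ∀ n₀ ∈ s, ∀ δ ∈ ∏ n ∈ s.erase n₀, n ^ M, ι δ • d = 0 := by
    intro n₀ hn₀ δ hδ
    set K := max M N with hK
    have hyK : y ∈ wtBdd ι Y m K := wtBdd_mono ι (le_max_right M N) hy
    have hndel : ¬ deltaRel ι m n₀ :=
      hnd m n₀ hm (hsP n₀ hn₀).1 hmne (hsP n₀ hn₀).2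
    have husplit := bimod_le_mix_sup ι hm (hsP n₀ hn₀).1 hndel u K
      (self_mem_gammaBimod ι u)
    rw [Submodule.mem_sup] at husplit
    obtain ⟨p, hp, q, hq, hpq⟩ := husplit
    -- q kills y
    have hqy : q • y = 0 := by
      have hle : mixS ι u ⊤ (m ^ K) ≤ LinearMap.ker (actOn (k := k) y) := by
        refine Submodule.span_le.mpr ?_
        rintro w ⟨ν, _, c, hc, μ, hμ, rfl⟩
        rw [SetLike.mem_coe, LinearMap.mem_ker, actOn_apply, mul_smul, mul_smul,
          hyK μ hμ, smul_zero, smul_zero]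
      have := hle hq
      rwa [LinearMap.mem_ker, actOn_apply] at this
    have hdp : d = π (p • y) := by
      rw [hd, ← hpq, add_smul, hqy, add_zero]
    -- p • y maps into the ι(n₀^K)-span of P
    have hple : mixS ι u (n₀ ^ K) ⊤ ≤
        Submodule.comap (π.comp (actOn (k := k) y))
          (Submodule.span k {w | ∃ ν ∈ n₀ ^ M, ∃ w' ∈ (P : Set Y), w = ι ν • w'}) := by
      refine Submodule.span_le.mpr ?_
      rintro w ⟨ν, hν, c, hc, μ, _, rfl⟩
      rw [SetLike.mem_coe, Submodule.mem_comap, LinearMap.comp_apply, actOn_apply]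
      have h1 : (ι ν * c * ι μ) • y = ι ν • (c • (ι μ • y)) := by
        rw [mul_smul, mul_smul]
      rw [h1, hπΓ]
      refine Submodule.subset_span ?_
      refine ⟨ν, Ideal.pow_le_pow_right (le_max_left M N) hν, π (c • (ι μ • y)), ?_, rfl⟩
      exact hbimodP c hc μ
    have hdmem : d ∈ Submodule.span k
        {w | ∃ ν ∈ n₀ ^ M, ∃ w' ∈ (P : Set Y), w = ι ν • w'} := by
      rw [hdp]
      have := hple hp
      rwa [Submodule.mem_comap, LinearMap.comp_apply, actOn_apply] at this
    -- now δ kills everything in that span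
    have hkill : Submodule.span k {w | ∃ ν ∈ n₀ ^ M, ∃ w' ∈ (P : Set Y), w = ι ν • w'} ≤
        LinearMap.ker (uSmulL (ι δ) : Y →ₗ[k] Y) := by
      refine Submodule.span_le.mpr ?_
      rintro w ⟨ν, hν, w', hw', rfl⟩
      rw [SetLike.mem_coe, LinearMap.mem_ker]
      show ι δ • ι ν • w' = 0
      exact kill_biSup_wtBdd_erase ι (hPZ hw') hν hδ
    have := hkill hdmem
    rw [LinearMap.mem_ker] at this
    exact this
  -- d is killed by the full product
  have hJ : ∀ μ ∈ ∏ n ∈ s, n ^ M, ι μ • d = 0 := by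
    intro μ hμ
    exact kill_biSup_wtBdd ι (hPZ hdP) hμ
  -- the annihilator ideal is ⊤
  have hann : annGamma ι d = ⊤ := by
    by_contra hne
    obtain ⟨p, hpmax, hple⟩ := Ideal.exists_le_maximal _ hne
    haveI := hpmax.isPrime
    have hJp : (∏ n ∈ s, n ^ M) ≤ p := by
      refine le_trans ?_ hple
      intro μ hμ
      exact hJ μ hμ
    obtain ⟨n₀, hn₀, hn₀p⟩ := (Ideal.IsPrime.prod_le hpmax.isPrime).mp hJp
    have hn₀le : n₀ ≤ p := Ideal.IsPrime.le_of_pow_le hn₀p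
    have hn₀eq : n₀ = p := (hsP n₀ hn₀).1.eq_of_le hpmax.ne_top hn₀le
    obtain ⟨γ, δ, hγ, hδ, hγδ⟩ := exists_crt (hsP n₀ hn₀).1 M (s.erase n₀)
      (fun n hn => (hsP n (Finset.mem_of_mem_erase hn)).1)
      (fun n hn => Finset.ne_of_mem_erase hn) M
    have hδp : δ ∈ p := hple (hδA n₀ hn₀ δ hδ)
    have hγp : γ ∈ p := by
      rw [← hn₀eq]
      exact Ideal.pow_le_self (Nat.succ_ne_zero M₁) hγ
    refine hpmax.ne_top (Ideal.eq_top_iff_one p |>.mpr ?_)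
    rw [← hγδ]
    exact Ideal.add_mem p hγp hδp
  have h1A : (1 : Γ) ∈ annGamma ι d := by rw [hann]; exact Submodule.mem_top
  have := (mem_annGamma ι).mp h1A
  rwa [map_one, one_smul] at this

end ULin

/-- Let `X, X'` be Gelfand-Tsetlin `U`-modules whose supports lie in
different Δ-equivalence classes of `Specm Γ`.  Then `Hom_U(X, X') = 0` and
`Ext¹_U(X, X') = 0` (every extension of `X` by `X'` splits). -/
theorem hom_and_ext_vanish_between_blocks
    (k Γ U : Type*) [Field k] [IsAlgClosed k] [CharZero k]
    [CommRing Γ] [Algebra k Γ] [Algebra.FiniteType k Γ]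
    [Ring U] [Algebra k U]
    (ι : Γ →ₐ[k] U) (hinj : Function.Injective ι)
    (X X' : Type u) [AddCommGroup X] [Module k X] [Module U X] [IsScalarTower k U X]
    [AddCommGroup X'] [Module k X'] [Module U X'] [IsScalarTower k U X']
    (hX : IsGelfandTsetlin X ι) (hX' : IsGelfandTsetlin X' ι)
    (hdisj : ∀ m n : Ideal Γ, m.IsMaximal → n.IsMaximal →
      wtSpace X ι m ≠ ⊥ → wtSpace X' ι n ≠ ⊥ → ¬ Relation.EqvGen (deltaRel ι) m n) :
    (∀ f : X →ₗ[U] X', f = 0) ∧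
      ∀ (Y : Type u) (_ : AddCommGroup Y) (_ : Module U Y)
        (f : X' →ₗ[U] Y) (g : Y →ₗ[U] X),
        Function.Injective f → Function.Surjective g →
        LinearMap.range f = LinearMap.ker g →
        ∃ s : X →ₗ[U] Y, g.comp s = LinearMap.id := by
  haveI : IsNoetherianRing Γ := Algebra.FiniteType.isNoetherianRing k Γ
  have hsupp : ∀ n : Ideal Γ, n.IsMaximal → wtSpace X ι n ≠ ⊥ → wtSpace X' ι n = ⊥ := by
    intro n hn hX0
    by_contra h
    exact hdisj n n hn hn hX0 h (Relation.EqvGen.rel n n (deltaRel_self ι hinj hn))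
  have hnd : ∀ m n : Ideal Γ, m.IsMaximal → n.IsMaximal → wtSpace X ι m ≠ ⊥ →
      wtSpace X' ι n ≠ ⊥ → ¬ deltaRel ι m n := by
    intro m n hm hn h1 h2 hrel
    exact hdisj m n hm hn h1 h2 (Relation.EqvGen.rel m n hrel)
  constructor
  · -- Hom vanishing
    intro f
    apply LinearMap.ext
    intro x
    rw [LinearMap.zero_apply]
    have hx : x ∈ ⨆ m ∈ {m : Ideal Γ | m.IsMaximal}, wtSpace X ι m := by
      rw [hX.2]; exact Submodule.mem_top
    obtain ⟨s, c, hsP, hcm, hcne, rfl⟩ := mem_biSup_wt ι hx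
    rw [map_sum]
    refine Finset.sum_eq_zero fun n hn => ?_
    have hne : wtSpace X ι n ≠ ⊥ := by
      intro hbot
      refine hcne n hn ?_
      have := hcm n hn
      rw [hbot] at this
      exact (Submodule.mem_bot k).mp this
    have hbot := hsupp n (hsP n hn) hne
    have hmem := map_mem_wtSpace ι f (hcm n hn)
    rw [hbot] at hmem
    exact (Submodule.mem_bot k).mp hmem
  · intro Y hAG hMU f g hfinj hgsurj hrange
    letI : AddCommGroup Y := hAG
    letI : Module U Y := hMU
    letI : Module k Y := Module.compHom Y (algebraMap k U)
    letI : IsScalarTower k U Y := ⟨fun c u y => by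
      show (c • u) • y = c • (u • y)
      rw [Algebra.smul_def, mul_smul]
      rfl⟩
    obtain ⟨s₀, hP1, hP2, hP3⟩ := exists_section ι f g hgsurj hrange hX.2 hX'.2 hsupp
    have hUL : ∀ (u : U) (x : X), u • s₀ x = s₀ (u • x) := by
      intro u x
      have hx : x ∈ ⨆ m ∈ {m : Ideal Γ | m.IsMaximal}, wtSpace X ι m := by
        rw [hX.2]; exact Submodule.mem_top
      obtain ⟨s, c, hsP, hcm, hcne, rfl⟩ := mem_biSup_wt ι hx
      rw [map_sum, Finset.smul_sum, Finset.smul_sum, map_sum]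
      refine Finset.sum_congr rfl fun n hn => ?_
      have hne : wtSpace X ι n ≠ ⊥ := by
        intro hbot
        refine hcne n hn ?_
        have := hcm n hn
        rw [hbot] at this
        exact (Submodule.mem_bot k).mp this
      obtain ⟨N, hN⟩ := hcm n hn
      exact section_ulinear ι f g hrange hX'.2 hnd s₀ hP1 hP2 hP3 u (hsP n hn) hne hN
    refine ⟨LinearMap.mk ⟨s₀, fun a b => s₀.map_add a b⟩ (fun u x => (hUL u x).symm), ?_⟩
    apply LinearMap.ext
    intro x
    exact hP1 x
end

section
/- Let M ⊆ Aut L be a group (L/K finite Galois with group G, M separating and G-conjugation closed), m ∈ Specm Γ with lifting ℓ_m to the integral closure of Γ in L, and suppose the stabilizer M_m of ℓ_m in M is finite. Then for any n ∈ Specm Γ, the set S(m,n) = {φ ∈ M | ℓ_n ∈ GφG·ℓ_m} satisfies |S(m,n)| ≤ |G|² |M_m| / (|G_m| |G_n|), where G_m, G_n are the stabilizers of ℓ_m, ℓ_n in G. -/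
/-- The set `S(m,n) = {φ ∈ M | ℓ_n ∈ G φ G · ℓ_m}`, for subgroups `G, M` of an ambient
group `Ω` acting on the space `X` of maximal ideals of the integral closure. -/
def galoisConnectingSet {Ω X : Type*} [Group Ω] [MulAction Ω X]
    (G M : Subgroup Ω) (lm ln : X) : Set Ω :=
  {φ | φ ∈ M ∧ ∃ g₁ ∈ G, ∃ g₂ ∈ G, g₂ • ln = (φ * g₁) • lm}

/-!
Double count the triples `(g₁, g₂, φ) ∈ G × G × M` with `φ g₁ ℓ_m = g₂ ℓ_n`.
For fixed `(g₁, g₂)` the admissible `φ` form a left coset of the stabilizer of `g₁ ℓ_m` in `M`,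
and conjugation by `g₁` carries them injectively into a coset of `M_m`; hence there are at most
`|G|² |M_m|` triples. Conversely, a witness `(g₁, g₂)` for `φ ∈ S(m,n)` yields the
`|G_m| |G_n|` distinct triples `(g₁ a, g₂ b, φ)` with `a ∈ G_m`, `b ∈ G_n`.
-/

open MulAction

section Transporter

variable {Ω X : Type*} [Group Ω] [MulAction Ω X] {M : Subgroup Ω} {x y : X}

variable (M x y) in
def transporter : Set Ω := {φ | φ ∈ M ∧ φ • x = y}

def transporterEquivStabilizer {φ₀ : Ω} (h₀ : φ₀ ∈ transporter M x y) :
    transporter M x y ≃ ↥(M ⊓ stabilizer Ω x) where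
  toFun φ := ⟨φ₀⁻¹ * φ, Subgroup.mem_inf.2 ⟨mul_mem (inv_mem h₀.1) φ.2.1, by
    rw [mem_stabilizer_iff, mul_smul, φ.2.2, ← h₀.2, inv_smul_smul]⟩⟩
  invFun ψ := ⟨φ₀ * ψ, mul_mem h₀.1 (Subgroup.mem_inf.1 ψ.2).1, by
    rw [mul_smul, mem_stabilizer_iff.1 (Subgroup.mem_inf.1 ψ.2).2, h₀.2]⟩
  left_inv φ := Subtype.ext (mul_inv_cancel_left φ₀ φ)
  right_inv ψ := Subtype.ext (inv_mul_cancel_left φ₀ ψ)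

theorem finite_transporter [Finite ↥(M ⊓ stabilizer Ω x)] : Finite (transporter M x y) := by
  rcases isEmpty_or_nonempty (transporter M x y) with _ | ⟨⟨φ₀⟩⟩
  · infer_instance
  · exact .of_equiv _ (transporterEquivStabilizer φ₀.2).symm

theorem card_transporter_le [Finite ↥(M ⊓ stabilizer Ω x)] :
    Nat.card (transporter M x y) ≤ Nat.card ↥(M ⊓ stabilizer Ω x) := by
  rcases isEmpty_or_nonempty (transporter M x y) with _ | ⟨⟨φ₀⟩⟩
  · simp
  · exact (Nat.card_congr (transporterEquivStabilizer φ₀.2)).le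

def transporterConj {g : Ω} (hg : ∀ φ ∈ M, g⁻¹ * φ * g ∈ M) :
    transporter M (g • x) y ↪ transporter M x (g⁻¹ • y) where
  toFun φ := ⟨g⁻¹ * φ * g, hg φ φ.2.1, by rw [mul_smul, mul_smul, φ.2.2]⟩
  inj' _ _ h := Subtype.ext (mul_left_cancel (mul_right_cancel (congrArg Subtype.val h)))

theorem finite_transporter_smul [Finite ↥(M ⊓ stabilizer Ω x)] {g : Ω}
    (hg : ∀ φ ∈ M, g⁻¹ * φ * g ∈ M) : Finite (transporter M (g • x) y) :=
  have := finite_transporter (M := M) (x := x) (y := g⁻¹ • y)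
  .of_injective _ (transporterConj hg).injective

theorem card_transporter_smul_le [Finite ↥(M ⊓ stabilizer Ω x)] {g : Ω}
    (hg : ∀ φ ∈ M, g⁻¹ * φ * g ∈ M) :
    Nat.card (transporter M (g • x) y) ≤ Nat.card ↥(M ⊓ stabilizer Ω x) :=
  have := finite_transporter (M := M) (x := x) (y := g⁻¹ • y)
  (Nat.card_le_card_of_injective _ (transporterConj hg).injective).trans card_transporter_le

end Transporter

section Incidence

variable {Ω X : Type*} [Group Ω] [MulAction Ω X] (G M : Subgroup Ω) (lm ln : X)

abbrev galoisIncidence : Type _ := Σ q : G × G, transporter M ((q.1 : Ω) • lm) ((q.2 : Ω) • ln)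

theorem card_galoisConnectingSet_mul_le_card_galoisIncidence [Finite (galoisIncidence G M lm ln)] :
    Nat.card (galoisConnectingSet G M lm ln) * Nat.card ↥(G ⊓ stabilizer Ω lm) *
        Nat.card ↥(G ⊓ stabilizer Ω ln) ≤ Nat.card (galoisIncidence G M lm ln) := by
  choose w₁ hw₁ w₂ hw₂ hw using fun φ : galoisConnectingSet G M lm ln => φ.2.2
  let f : galoisConnectingSet G M lm ln × ↥(G ⊓ stabilizer Ω lm) × ↥(G ⊓ stabilizer Ω ln) →
      galoisIncidence G M lm ln := fun ⟨φ, a, b⟩ =>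
    ⟨(⟨w₁ φ * a, mul_mem (hw₁ φ) a.2.1⟩, ⟨w₂ φ * b, mul_mem (hw₂ φ) b.2.1⟩), φ, φ.2.1, by
      rw [mul_smul, mul_smul, mem_stabilizer_iff.1 a.2.2, mem_stabilizer_iff.1 b.2.2,
        hw φ, mul_smul]⟩
  have hf : Function.Injective f := by
    rintro ⟨φ, a, b⟩ ⟨φ', a', b'⟩ h
    have := congrArg
      (fun p : galoisIncidence G M lm ln => ((p.1.1 : Ω), (p.1.2 : Ω), (p.2 : Ω))) h
    simp only [Prod.mk.injEq] at this
    obtain ⟨ha, hb, hφ⟩ := this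
    obtain rfl : φ = φ' := Subtype.ext hφ
    exact Prod.ext rfl
      (Prod.ext (Subtype.ext (mul_left_cancel ha)) (Subtype.ext (mul_left_cancel hb)))
  simpa only [Nat.card_prod, mul_assoc] using Nat.card_le_card_of_injective f hf

end Incidence

/-- Let `G` (finite, playing the role of the Galois group) and `M`
(a group, closed under `G`-conjugation) be subgroups of a group `Ω` acting on the set `X`
of maximal ideals of the integral closure of `Γ` in `L`, let `ℓ_m, ℓ_n ∈ X` be liftings
of `m, n`, and suppose the stabilizer `M_m` of `ℓ_m` in `M` is finite.  Then
`|S(m,n)| ≤ |G|² |M_m| / (|G_m| |G_n|)`, i.e.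
`|S(m,n)| · |G_m| · |G_n| ≤ |G|² · |M_m|`. -/
theorem card_connecting_set_le
    {Ω X : Type*} [Group Ω] [MulAction Ω X] (G M : Subgroup Ω)
    (hG : Finite G)
    (hconj : ∀ g ∈ G, ∀ φ ∈ M, g⁻¹ * φ * g ∈ M)
    (lm ln : X)
    (hMm : Finite ↥(M ⊓ MulAction.stabilizer Ω lm)) :
    Nat.card (galoisConnectingSet G M lm ln) *
        Nat.card ↥(G ⊓ MulAction.stabilizer Ω lm) *
        Nat.card ↥(G ⊓ MulAction.stabilizer Ω ln) ≤
      Nat.card G ^ 2 * Nat.card ↥(M ⊓ MulAction.stabilizer Ω lm) := by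
  have : Fintype G := .ofFinite G
  have (q : G × G) : Finite (transporter M ((q.1 : Ω) • lm) ((q.2 : Ω) • ln)) :=
    finite_transporter_smul (hconj q.1 q.1.2)
  calc _ ≤ Nat.card (galoisIncidence G M lm ln) :=
        card_galoisConnectingSet_mul_le_card_galoisIncidence G M lm ln
    _ = ∑ q : G × G, Nat.card (transporter M ((q.1 : Ω) • lm) ((q.2 : Ω) • ln)) := Nat.card_sigma
    _ ≤ ∑ _q : G × G, Nat.card ↥(M ⊓ stabilizer Ω lm) :=
        Finset.sum_le_sum fun q _ => card_transporter_smul_le (hconj q.1 q.1.2)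
    _ = _ := by simp [Nat.card_eq_fintype_card, sq]
end

section
/- In the setting above, for m, n ∈ Specm Γ with M a group: |M_m| < ∞ if and only if for some n at least one of S(m,n), S(n,m) is nonempty and finite; and if |M_m| < ∞ and both S(m,n), S(n,m) are nonempty, then |M_n| < ∞ and |S(m,n)| = |S(n,m)|. -/
/-! Both directions compare `S(m,n)` with the stabilizer `M_m`. For fixed `g₁, g₂ ∈ G` the
elements of `M` sending `g₁ ℓ_m` to `g₂ ℓ_n` form a left coset of `M ∩ Stab(g₁ ℓ_m)`, which is
conjugate to `M_m` because `G` normalizes `M`; so `S(m,n)` is a union of at most `|G|²` such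
cosets. Finally `S(n,m) = S(m,n)⁻¹`, which transfers everything from `S(m,n)` to `S(n,m)`. -/

open Pointwise MulAction

section Transporter

variable {Ω X : Type*} [Group Ω] [MulAction Ω X]

theorem setOf_mem_and_smul_eq_eq_smul_inf_stabilizer (H : Subgroup Ω) {x y : X} {φ₀ : Ω}
    (hφ₀ : φ₀ ∈ H) (hxy : φ₀ • x = y) :
    {φ | φ ∈ H ∧ φ • x = y} = φ₀ • ((H ⊓ stabilizer Ω x : Subgroup Ω) : Set Ω) := by
  ext φ
  rw [Set.mem_smul_set_iff_inv_smul_mem, smul_eq_mul, SetLike.mem_coe, Subgroup.mem_inf,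
    mem_stabilizer_iff, mul_smul, inv_smul_eq_iff, hxy, Subgroup.mul_mem_cancel_left H
      (H.inv_mem hφ₀)]
  exact Iff.rfl

theorem finite_setOf_mem_and_smul_eq_iff (H : Subgroup Ω) {x y : X} {φ₀ : Ω}
    (hφ₀ : φ₀ ∈ H) (hxy : φ₀ • x = y) :
    {φ | φ ∈ H ∧ φ • x = y}.Finite ↔ ((H ⊓ stabilizer Ω x : Subgroup Ω) : Set Ω).Finite := by
  rw [setOf_mem_and_smul_eq_eq_smul_inf_stabilizer H hφ₀ hxy, Set.finite_smul_set]

theorem finite_inf_stabilizer_smul_of_conj_mem {M : Subgroup Ω} {g : Ω}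
    (hg : ∀ φ ∈ M, g⁻¹ * φ * g ∈ M) {x : X}
    (hfin : ((M ⊓ stabilizer Ω x : Subgroup Ω) : Set Ω).Finite) :
    ((M ⊓ stabilizer Ω (g • x) : Subgroup Ω) : Set Ω).Finite := by
  refine (hfin.image fun ψ => g * ψ * g⁻¹).subset fun φ hφ => ?_
  obtain ⟨hφM, hφx⟩ := Subgroup.mem_inf.1 hφ
  refine ⟨g⁻¹ * φ * g, Subgroup.mem_inf.2 ⟨hg φ hφM, ?_⟩, by group⟩
  rw [mem_stabilizer_iff, mul_smul, mul_smul, mem_stabilizer_iff.1 hφx, inv_smul_smul]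

end Transporter

section ConnectingSet

variable {Ω X : Type*} [Group Ω] [MulAction Ω X] {G M : Subgroup Ω}

theorem finite_inf_stabilizer_smul_iff (hconj : ∀ g ∈ G, ∀ φ ∈ M, g⁻¹ * φ * g ∈ M)
    {g : Ω} (hg : g ∈ G) (x : X) :
    ((M ⊓ stabilizer Ω (g • x) : Subgroup Ω) : Set Ω).Finite ↔
      ((M ⊓ stabilizer Ω x : Subgroup Ω) : Set Ω).Finite := by
  refine ⟨fun h => ?_, finite_inf_stabilizer_smul_of_conj_mem (hconj g hg)⟩
  have hg' : ∀ φ ∈ M, g⁻¹⁻¹ * φ * g⁻¹ ∈ M := hconj g⁻¹ (G.inv_mem hg)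
  simpa only [inv_smul_smul] using finite_inf_stabilizer_smul_of_conj_mem hg' h

theorem galoisConnectingSet_eq_biUnion (lm ln : X) :
    galoisConnectingSet G M lm ln =
      ⋃ g₁ ∈ (G : Set Ω), ⋃ g₂ ∈ (G : Set Ω), {φ | φ ∈ M ∧ φ • g₁ • lm = g₂ • ln} := by
  ext φ
  simp only [galoisConnectingSet, Set.mem_iUnion, Set.mem_ofPred_eq, SetLike.mem_coe, mul_smul,
    exists_prop, eq_comm]
  tauto

theorem inv_mem_galoisConnectingSet {lm ln : X} {φ : Ω}
    (h : φ ∈ galoisConnectingSet G M lm ln) : φ⁻¹ ∈ galoisConnectingSet G M ln lm := by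
  obtain ⟨hφ, g₁, hg₁, g₂, hg₂, hw⟩ := h
  refine ⟨M.inv_mem hφ, g₂, hg₂, g₁, hg₁, ?_⟩
  rw [mul_smul, hw, mul_smul, inv_smul_smul]

theorem galoisConnectingSet_swap (lm ln : X) :
    galoisConnectingSet G M ln lm = (galoisConnectingSet G M lm ln)⁻¹ :=
  Set.ext fun φ => ⟨fun h => by simpa using inv_mem_galoisConnectingSet h,
    fun h => by simpa using inv_mem_galoisConnectingSet h⟩

theorem one_mem_galoisConnectingSet_self (lm : X) : (1 : Ω) ∈ galoisConnectingSet G M lm lm :=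
  ⟨M.one_mem, 1, G.one_mem, 1, G.one_mem, by rw [one_mul]⟩

theorem finite_inf_stabilizer_of_galoisConnectingSet
    (hconj : ∀ g ∈ G, ∀ φ ∈ M, g⁻¹ * φ * g ∈ M) {lm ln : X}
    (hne : (galoisConnectingSet G M lm ln).Nonempty)
    (hfin : (galoisConnectingSet G M lm ln).Finite) :
    ((M ⊓ stabilizer Ω lm : Subgroup Ω) : Set Ω).Finite := by
  obtain ⟨φ₀, hφ₀, g₁, hg₁, g₂, hg₂, hw⟩ := hne
  have hcoset : {φ | φ ∈ M ∧ φ • g₁ • lm = g₂ • ln} ⊆ galoisConnectingSet G M lm ln :=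
    fun φ ⟨hφ, h⟩ => ⟨hφ, g₁, hg₁, g₂, hg₂, by rw [mul_smul, h]⟩
  have hφ₀w : φ₀ • g₁ • lm = g₂ • ln := by rw [← mul_smul, hw]
  rw [← finite_inf_stabilizer_smul_iff hconj hg₁, ← finite_setOf_mem_and_smul_eq_iff M hφ₀ hφ₀w]
  exact hfin.subset hcoset

theorem galoisConnectingSet_finite (hG : Finite G) (hconj : ∀ g ∈ G, ∀ φ ∈ M, g⁻¹ * φ * g ∈ M)
    {lm : X} (hfin : ((M ⊓ stabilizer Ω lm : Subgroup Ω) : Set Ω).Finite) (ln : X) :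
    (galoisConnectingSet G M lm ln).Finite := by
  rw [galoisConnectingSet_eq_biUnion]
  refine (Set.toFinite _).biUnion fun g₁ hg₁ => (Set.toFinite _).biUnion fun g₂ _ => ?_
  rcases Set.eq_empty_or_nonempty {φ | φ ∈ M ∧ φ • g₁ • lm = g₂ • ln} with he | ⟨φ₀, hφ₀, hw⟩
  · exact he ▸ Set.finite_empty
  · rwa [finite_setOf_mem_and_smul_eq_iff M hφ₀ hw, finite_inf_stabilizer_smul_iff hconj hg₁]

end ConnectingSet

/-- In the Galois setting (`G` a finite group, `M` a group closed under
`G`-conjugation, both acting on the set `X` of liftings), for a lifting `ℓ_m`: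
`|M_m| < ∞` iff for some `ℓ_n` at least one of `S(m,n)`, `S(n,m)` is nonempty and finite;
and if `|M_m| < ∞` and both `S(m,n)`, `S(n,m)` are nonempty, then `|M_n| < ∞` and
`|S(m,n)| = |S(n,m)|`. -/
theorem stabilizer_finite_iff_connecting_set
    {Ω X : Type*} [Group Ω] [MulAction Ω X] (G M : Subgroup Ω)
    (hG : Finite G)
    (hconj : ∀ g ∈ G, ∀ φ ∈ M, g⁻¹ * φ * g ∈ M)
    (lm : X) :
    (((M ⊓ MulAction.stabilizer Ω lm : Subgroup Ω) : Set Ω).Finite ↔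
      ∃ ln : X,
        ((galoisConnectingSet G M lm ln).Nonempty ∧ (galoisConnectingSet G M lm ln).Finite) ∨
        ((galoisConnectingSet G M ln lm).Nonempty ∧ (galoisConnectingSet G M ln lm).Finite)) ∧
    ∀ ln : X,
      ((M ⊓ MulAction.stabilizer Ω lm : Subgroup Ω) : Set Ω).Finite →
      (galoisConnectingSet G M lm ln).Nonempty →
      (galoisConnectingSet G M ln lm).Nonempty →
      ((M ⊓ MulAction.stabilizer Ω ln : Subgroup Ω) : Set Ω).Finite ∧
        Nat.card (galoisConnectingSet G M lm ln) =
          Nat.card (galoisConnectingSet G M ln lm) := by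
  refine ⟨⟨fun hfin => ⟨lm, .inl ⟨⟨1, one_mem_galoisConnectingSet_self lm⟩,
    galoisConnectingSet_finite hG hconj hfin lm⟩⟩, ?_⟩, fun ln hfin _ hnm => ?_⟩
  · rintro ⟨ln, ⟨hne, hS⟩ | ⟨hne, hS⟩⟩
    · exact finite_inf_stabilizer_of_galoisConnectingSet hconj hne hS
    · rw [galoisConnectingSet_swap, Set.nonempty_inv] at hne
      rw [galoisConnectingSet_swap, Set.finite_inv] at hS
      exact finite_inf_stabilizer_of_galoisConnectingSet hconj hne hS
  · have hS : (galoisConnectingSet G M ln lm).Finite := by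
      rw [galoisConnectingSet_swap, Set.finite_inv]
      exact galoisConnectingSet_finite hG hconj hfin ln
    exact ⟨finite_inf_stabilizer_of_galoisConnectingSet hconj hnm hS,
      by rw [galoisConnectingSet_swap lm ln, Set.natCard_inv]⟩
end
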